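/- arXiv:2006.09931 — 2 statements merged into one kernel-verified Lean document; each statement's English description precedes it below -/
import Mathlib

section
/- Let E be a directed graph, K a field, and c a simple closed path of length n. Then the ℤ-graded L_K(E)-module KL_{c^∞} is graded simple but not simple; for m, m' ∈ ℤ, the shifted modules KL_{c^∞}(m) and KL_{c^∞}(m') are graded isomorphic if and only if n divides m − m'; and if c' is another simple closed path such that c'^∞ is not tail-equivalent to c^∞, then KL_{c^∞}(m) and KL_{c'^∞}(m') are not graded isomorphic for any m, m' ∈ ℤ. -/
open scoped Classical

/-- A directed graph: vertices, edges, source and range maps. -/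
structure DirGraph : Type 1 where
  V : Type
  E : Type
  s : E → V
  r : E → V

namespace DirGraph

variable (G : DirGraph)

/-- A finite path: a source vertex together with a compatible list of edges
(the empty list gives the path of length 0 at `src`). -/
structure FinPath where
  src : G.V
  edges : List G.E
  src_eq : ∀ e ∈ edges.head?, G.s e = src
  chain : edges.Chain' (fun e f => G.r e = G.s f)

variable {G}

/-- The range of a finite path. -/
def FinPath.rng (μ : G.FinPath) : G.V :=
  ((μ.edges.getLast?).map G.r).getD μ.src

/-- The length of a finite path. -/
def FinPath.length (μ : G.FinPath) : ℕ := μ.edges.length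

variable (G)

/-- An infinite path. -/
structure InfPath where
  edges : ℕ → G.E
  chain : ∀ n, G.r (edges n) = G.s (edges (n + 1))

/-- The source of an infinite path. -/
def InfPath.src {G : DirGraph} (p : G.InfPath) : G.V := G.s (p.edges 0)

def IsSink (v : G.V) : Prop := ∀ e, G.s e ≠ v

def IsInfEmitter (v : G.V) : Prop := {e | G.s e = v}.Infinite

def IsSingular (v : G.V) : Prop := IsSink G v ∨ IsInfEmitter G v

/-- Boundary paths: infinite paths, together with finite paths ending in a singular vertex. -/
def BPath : Type := {x : G.FinPath ⊕ G.InfPath // ∀ μ, x = Sum.inl μ → IsSingular G μ.rng}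

variable {G}

/-- The source of a boundary path. -/
def BPath.src (x : G.BPath) : G.V :=
  match x.1 with
  | Sum.inl μ => μ.src
  | Sum.inr p => p.src

def BPath.IsInfinite (x : G.BPath) : Prop := ∃ p, x.1 = Sum.inr p

/-- `IsCat μ p x` means `x = μ p`, i.e. `x` is the concatenation of the finite path `μ`
with the boundary path `p` (in particular `r(μ) = s(p)`). -/
def IsCat (μ : G.FinPath) (p x : G.BPath) : Prop :=
  μ.rng = p.src ∧
  match p.1, x.1 with
  | Sum.inl q, Sum.inl ξ => ξ.src = μ.src ∧ ξ.edges = μ.edges ++ q.edges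
  | Sum.inr q, Sum.inr ξ =>
      (∀ (i : ℕ) (h : i < μ.edges.length), ξ.edges i = μ.edges.get ⟨i, h⟩) ∧
      (∀ i : ℕ, ξ.edges (μ.edges.length + i) = q.edges i)
  | _, _ => False

/-- `x ∼_k y` : tail equivalence with lag `k`. -/
def TailEqLag (x y : G.BPath) (k : ℤ) : Prop :=
  ∃ (μ ν : G.FinPath) (p : G.BPath),
    IsCat μ p x ∧ IsCat ν p y ∧ (μ.length : ℤ) - (ν.length : ℤ) = k

/-- Tail equivalence. -/
def TailEq (x y : G.BPath) : Prop := ∃ k, TailEqLag x y k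

/-- The tail-equivalence class (orbit) of a boundary path. -/
def orbit (x : G.BPath) : Set G.BPath := {y | TailEq y x}

/-- A closed path: positive length, same source and range. -/
def FinPath.IsClosed (c : G.FinPath) : Prop := 0 < c.length ∧ c.rng = c.src

/-- A boundary path is rational if it is tail equivalent to `c^∞` for some closed path `c`;
here `c^∞` is characterized as the unique boundary path `p` with `p = c p`. -/
def IsRational (x : G.BPath) : Prop :=
  ∃ (c : G.FinPath) (p : G.BPath), 0 < c.length ∧ IsCat c p p ∧ TailEq x p

/-- A simple closed path: a closed path which is not a proper power of a closed path. -/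
def FinPath.IsSimpleClosed (c : G.FinPath) : Prop :=
  c.IsClosed ∧
    ¬ ∃ (d : G.FinPath) (n : ℕ), 2 ≤ n ∧ d.IsClosed ∧ c.src = d.src ∧
        c.edges = (List.replicate n d.edges).flatten

/-- A cycle: a closed path passing through no vertex twice. -/
def FinPath.IsCycle (c : G.FinPath) : Prop := c.IsClosed ∧ (c.edges.map G.s).Nodup

/-- An exit for a finite path. -/
def FinPath.HasExit (c : G.FinPath) : Prop :=
  ∃ (i : ℕ) (h : i < c.edges.length) (e : G.E),
    G.s e = G.s (c.edges.get ⟨i, h⟩) ∧ e ≠ c.edges.get ⟨i, h⟩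

/-- `c` is a rotation of `d`. -/
def FinPath.IsRotationOf (c d : G.FinPath) : Prop := ∃ i, c.edges = d.edges.rotate i

/-- A maximal cycle: a cycle such that any cycle from which there is a finite path to its
source is a rotation of it. -/
def FinPath.IsMaxCycle (c : G.FinPath) : Prop :=
  c.IsCycle ∧ ∀ d : G.FinPath, d.IsCycle →
    (∃ μ : G.FinPath, μ.src = d.src ∧ μ.rng = c.src) → d.IsRotationOf c

/-- A maximal sink: a sink with no finite path from the source of any cycle to it. -/
def IsMaxSink (G : DirGraph) (v : G.V) : Prop :=
  IsSink G v ∧ ¬ ∃ (d μ : G.FinPath), d.IsCycle ∧ μ.src = d.src ∧ μ.rng = v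

/-- A graph is row-finite if every vertex emits finitely many edges. -/
def RowFinite (G : DirGraph) : Prop := ∀ v : G.V, {e | G.s e = v}.Finite

/-- The set of predecessors of a vertex. -/
def preds (G : DirGraph) (v : G.V) : Set G.V := {w | ∃ μ : G.FinPath, μ.src = w ∧ μ.rng = v}

/-- The finite path of length 0 at a vertex. -/
def vertexPath (G : DirGraph) (v : G.V) : G.FinPath :=
  ⟨v, [], by intro e he; simp at he, List.isChain_nil⟩

/-- A singular vertex, seen as a boundary path. -/
def vertexBPath (G : DirGraph) (v : G.V) (h : IsSingular G v) : G.BPath :=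
  ⟨Sum.inl (vertexPath G v), by
    intro μ hμ
    injection hμ with h2
    subst h2
    exact h⟩

/-- The finite path consisting of a single edge. -/
def singleE (G : DirGraph) (e : G.E) : G.FinPath :=
  ⟨G.s e, [e], by
    intro f hf
    simp only [List.head?_cons, Option.mem_def, Option.some.injEq] at hf
    subst hf
    rfl, List.isChain_singleton e⟩

/-- `a_μ`: the product of the values of `a` along a finite path. -/
def aval {G : DirGraph} {K : Type} [Field K] (a : G.E → K) (μ : G.FinPath) : K :=
  (μ.edges.map a).prod

/-! ## The Leavitt path algebra -/

/-- Generators of the Leavitt path algebra: vertices, edges and ghost edges. -/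
inductive Gen (G : DirGraph) : Type
  | vtx : G.V → Gen G
  | edg : G.E → Gen G
  | ghd : G.E → Gen G

/-- The defining relations of the Leavitt path algebra. -/
inductive LRel (G : DirGraph) (K : Type) [Field K] :
    FreeAlgebra K (Gen G) → FreeAlgebra K (Gen G) → Prop
  | vv_eq (v : G.V) :
      LRel G K (FreeAlgebra.ι K (Gen.vtx v) * FreeAlgebra.ι K (Gen.vtx v))
        (FreeAlgebra.ι K (Gen.vtx v))
  | vv_ne {v w : G.V} (h : v ≠ w) :
      LRel G K (FreeAlgebra.ι K (Gen.vtx v) * FreeAlgebra.ι K (Gen.vtx w)) 0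
  | e1l (e : G.E) :
      LRel G K (FreeAlgebra.ι K (Gen.vtx (G.s e)) * FreeAlgebra.ι K (Gen.edg e))
        (FreeAlgebra.ι K (Gen.edg e))
  | e1r (e : G.E) :
      LRel G K (FreeAlgebra.ι K (Gen.edg e) * FreeAlgebra.ι K (Gen.vtx (G.r e)))
        (FreeAlgebra.ι K (Gen.edg e))
  | e2l (e : G.E) :
      LRel G K (FreeAlgebra.ι K (Gen.vtx (G.r e)) * FreeAlgebra.ι K (Gen.ghd e))
        (FreeAlgebra.ι K (Gen.ghd e))
  | e2r (e : G.E) :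
      LRel G K (FreeAlgebra.ι K (Gen.ghd e) * FreeAlgebra.ι K (Gen.vtx (G.s e)))
        (FreeAlgebra.ι K (Gen.ghd e))
  | ck1_eq (e : G.E) :
      LRel G K (FreeAlgebra.ι K (Gen.ghd e) * FreeAlgebra.ι K (Gen.edg e))
        (FreeAlgebra.ι K (Gen.vtx (G.r e)))
  | ck1_ne {e f : G.E} (h : e ≠ f) :
      LRel G K (FreeAlgebra.ι K (Gen.ghd e) * FreeAlgebra.ι K (Gen.edg f)) 0
  | ck2 (v : G.V) (hfin : {e | G.s e = v}.Finite) (hne : ∃ e, G.s e = v) :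
      LRel G K (FreeAlgebra.ι K (Gen.vtx v))
        (∑ e ∈ hfin.toFinset, FreeAlgebra.ι K (Gen.edg e) * FreeAlgebra.ι K (Gen.ghd e))

/-- The Leavitt path algebra of `G` over `K`. -/
abbrev LPA (G : DirGraph) (K : Type) [Field K] : Type := RingQuot (LRel G K)

/-- The image of a vertex in the Leavitt path algebra. -/
def ofV (G : DirGraph) (K : Type) [Field K] (v : G.V) : LPA G K :=
  RingQuot.mkAlgHom K (LRel G K) (FreeAlgebra.ι K (Gen.vtx v))

/-- The image of an edge in the Leavitt path algebra. -/
def ofE (G : DirGraph) (K : Type) [Field K] (e : G.E) : LPA G K :=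
  RingQuot.mkAlgHom K (LRel G K) (FreeAlgebra.ι K (Gen.edg e))

/-- The image of a ghost edge in the Leavitt path algebra. -/
def ofG (G : DirGraph) (K : Type) [Field K] (e : G.E) : LPA G K :=
  RingQuot.mkAlgHom K (LRel G K) (FreeAlgebra.ι K (Gen.ghd e))

/-- The element `μ` of the Leavitt path algebra associated to a finite path `μ`. -/
def pathElem (G : DirGraph) (K : Type) [Field K] (μ : G.FinPath) : LPA G K :=
  ofV G K μ.src * (μ.edges.map (ofE G K)).prod

/-- The element `μ^*` of the Leavitt path algebra associated to a finite path `μ`. -/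
def pathStarElem (G : DirGraph) (K : Type) [Field K] (μ : G.FinPath) : LPA G K :=
  (μ.edges.reverse.map (ofG G K)).prod * ofV G K μ.src

/-- The degree-`n` homogeneous component of the canonical `ℤ`-grading of the Leavitt
path algebra: the span of the monomials `μ ν^*` with `|μ| - |ν| = n`. -/
def LPAdeg (G : DirGraph) (K : Type) [Field K] (n : ℤ) : Submodule K (LPA G K) :=
  Submodule.span K {x | ∃ μ ν : G.FinPath, μ.rng = ν.rng ∧
    (μ.length : ℤ) - (ν.length : ℤ) = n ∧ x = pathElem G K μ * pathStarElem G K ν}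

/-- `W` is a `ℤ`-grading making `M` a graded module over the canonically graded
Leavitt path algebra. -/
def IsModuleGrading (G : DirGraph) (K : Type) [Field K] (M : Type) [AddCommGroup M]
    [Module K M] [Module (LPA G K) M] (W : ℤ → Submodule K M) : Prop :=
  DirectSum.IsInternal W ∧
    ∀ (m k : ℤ) (a : LPA G K) (y : M), a ∈ LPAdeg G K m → y ∈ W k → a • y ∈ W (m + k)

/-- A set is graded (with respect to a grading `W`) if each of its elements is a finite sum
of homogeneous elements of the set. -/
def GradedCarrier {K M : Type} [Field K] [AddCommGroup M] [Module K M]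
    (W : ℤ → Submodule K M) (S : Set M) : Prop :=
  ∀ m ∈ S, ∃ l : List M, (∀ z ∈ l, z ∈ S ∧ ∃ k, z ∈ W k) ∧ l.sum = m

/-- A graded isomorphism between graded modules over the Leavitt path algebra. -/
def GradedIsoLPA (G : DirGraph) (K : Type) [Field K] (M N : Type)
    [AddCommGroup M] [AddCommGroup N] [Module K M] [Module K N]
    [Module (LPA G K) M] [Module (LPA G K) N]
    (W : ℤ → Submodule K M) (W' : ℤ → Submodule K N) : Prop :=
  ∃ f : M ≃ₗ[LPA G K] N, (∀ k, ∀ m ∈ W k, f m ∈ W' k) ∧ ∀ k, ∀ n ∈ W' k, f.symm n ∈ W k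

/-- A module over the Leavitt path algebra is unital if it is generated by the images of the
vertices. -/
def IsUnitalModule (G : DirGraph) (K : Type) [Field K] (M : Type) [AddCommGroup M]
    [Module (LPA G K) M] : Prop :=
  ∀ m : M, m ∈ Submodule.span (LPA G K) {y : M | ∃ (v : G.V) (m' : M), y = ofV G K v • m'}

/-! ## Chen modules, specified by a basis and the action of the generators -/

/-- A specification of the (twisted) Chen module attached to a boundary path `x`:
an `L_K(E)`-module `M` which is a `K'`-vector space with basis the tail-equivalence class
of `x`, the generators acting by the τ-twisted shift formulas. Here `K ⊆ K'` is a field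
extension and `τ : E¹ → K'` is a family of nonzero scalars. -/
structure ChenSpecT (G : DirGraph) (K K' : Type) [Field K] [Field K'] [Algebra K K']
    (τ : G.E → K') (x : G.BPath) (M : Type) [AddCommGroup M] [Module K' M]
    [Module (LPA G K) M] : Type where
  tau_ne : ∀ e, τ e ≠ 0
  basis : Module.Basis (orbit x) K' M
  act_v : ∀ (v : G.V) (p : orbit x),
    ofV G K v • basis p = if v = BPath.src (p : G.BPath) then basis p else 0
  act_e : ∀ (e : G.E) (p q : orbit x), IsCat (singleE G e) (p : G.BPath) (q : G.BPath) →
    ofE G K e • basis p = τ e • basis q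
  act_e_zero : ∀ (e : G.E) (p : orbit x),
    (¬ ∃ q : G.BPath, IsCat (singleE G e) (p : G.BPath) q) → ofE G K e • basis p = 0
  act_g : ∀ (e : G.E) (p q : orbit x), IsCat (singleE G e) (p : G.BPath) (q : G.BPath) →
    ofG G K e • basis q = (τ e)⁻¹ • basis p
  act_g_zero : ∀ (e : G.E) (q : orbit x),
    (¬ ∃ p : G.BPath, IsCat (singleE G e) p (q : G.BPath)) → ofG G K e • basis q = 0

/-- Specification of the Chen module `V_{[x]}^a` twisted by `a : E¹ → K^*`
(`a = 1` gives `V_{[x]}`). -/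
abbrev ChenSpec (G : DirGraph) (K : Type) [Field K] (a : G.E → K) (x : G.BPath) (M : Type)
    [AddCommGroup M] [Module K M] [Module (LPA G K) M] : Type :=
  ChenSpecT G K K a x M

/-- The canonical grading on a Chen module: the degree-`k` component is spanned by the basis
elements tail-equivalent to `x` with lag `k`. -/
def chenW {G : DirGraph} {K' : Type} [Field K'] {x : G.BPath} {M : Type}
    [AddCommGroup M] [Module K' M] (b : Module.Basis (orbit x) K' M) (k : ℤ) : Submodule K' M :=
  Submodule.span K' (⇑b '' {p : orbit x | TailEqLag (p : G.BPath) x k})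

/-! ## The module `K L_x` -/

/-- The set `L_x` of pairs `(y, k)` with `y ∼_k x`. -/
def Lset (G : DirGraph) (x : G.BPath) : Set (G.BPath × ℤ) := {yk | TailEqLag yk.1 x yk.2}

/-- The underlying `K`-vector space of the module `K L_x`, with basis `L_x`. -/
abbrev KLCarrier (G : DirGraph) (K : Type) [Field K] (x : G.BPath) : Type := (Lset G x) →₀ K

/-- Specification of the `L_K(E)`-module structure on `K L_x`, given by
`(μ ν^*) ⬝ (y, k) = (μ p, |μ| - |ν| + k)` when `y = ν p`, and `0` otherwise. The module
structure is encoded as a `K`-algebra homomorphism `ρ` to the endomorphism algebra. -/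
def KLSpec (G : DirGraph) (K : Type) [Field K] (x : G.BPath)
    (ρ : LPA G K →ₐ[K] Module.End K (KLCarrier G K x)) : Prop :=
  (∀ (μ ν : G.FinPath), μ.rng = ν.rng → ∀ (yk zk : Lset G x) (p : G.BPath),
      IsCat ν p (yk : G.BPath × ℤ).1 → IsCat μ p (zk : G.BPath × ℤ).1 →
      (zk : G.BPath × ℤ).2 = (yk : G.BPath × ℤ).2 + (μ.length : ℤ) - (ν.length : ℤ) →
      ρ (pathElem G K μ * pathStarElem G K ν) (Finsupp.single yk 1) = Finsupp.single zk 1) ∧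
  (∀ (μ ν : G.FinPath), μ.rng = ν.rng → ∀ yk : Lset G x,
      (¬ ∃ p : G.BPath, IsCat ν p (yk : G.BPath × ℤ).1) →
      ρ (pathElem G K μ * pathStarElem G K ν) (Finsupp.single yk 1) = 0)

/-- The canonical grading of `K L_x`: `(y, k)` is homogeneous of degree `k`. -/
noncomputable def KLgr (G : DirGraph) (K : Type) [Field K] (x : G.BPath) (k : ℤ) :
    Submodule K (KLCarrier G K x) :=
  Submodule.span K {m | ∃ yk : Lset G x, (yk : G.BPath × ℤ).2 = k ∧ m = Finsupp.single yk 1}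

end DirGraph

open DirGraph

/-!
Write `c^∞` as an infinite path `q` with `q.tail |c| = q`; all paths tail-equivalent to it are
infinite. A projection `ν ν^*` acts on `K L_{c^∞}` by keeping the basis vectors `(y, k)` with `y`
starting with `ν`, so a nonzero homogeneous element of a graded submodule can be cut down to a
single basis vector, and the monomials `μ ν^*` carry any basis vector to any other: the module is
graded simple. Shifting degrees by a multiple of `|c|` commutes with the action; this gives the
graded isomorphisms between shifts, and the image of `1 - shift` is a nonzero proper submodule
(it is killed by the sum of coefficients). Conversely, `(c^∞, 0)` is fixed by the projections
along all prefixes of `c^∞`, so a module isomorphism sends it to a vector supported on pairs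
`(c^∞, j)`. In `K L_{c^∞}` this gives `c^∞ ∼_j c^∞`, hence `|c| ∣ j` because `|c|` is the minimal
period of `c^∞` (`c` is not a proper power); in `K L_{c'^∞}` it gives `c^∞ ∼ c'^∞`.
-/

namespace DirGraph

variable {G : DirGraph}

namespace InfPath

theorem ext {p q : G.InfPath} (h : p.edges = q.edges) : p = q := by
  cases p; cases q; cases h; rfl

def tail (q : G.InfPath) (N : ℕ) : G.InfPath :=
  ⟨fun i => q.edges (N + i), fun i => by simpa [Nat.add_assoc] using q.chain (N + i)⟩

@[simp] theorem tail_edges (q : G.InfPath) (N i : ℕ) : (q.tail N).edges i = q.edges (N + i) :=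
  rfl

@[simp] theorem tail_zero (q : G.InfPath) : q.tail 0 = q :=
  ext <| funext fun i => by simp

theorem tail_tail (q : G.InfPath) (M N : ℕ) : (q.tail M).tail N = q.tail (M + N) :=
  ext <| funext fun i => by simp [Nat.add_assoc]

def shift (q : G.InfPath) : G.InfPath := q.tail 1

theorem iterate_shift (q : G.InfPath) (N : ℕ) : shift^[N] q = q.tail N := by
  induction N with
  | zero => exact (tail_zero q).symm
  | succ N ih => rw [Function.iterate_succ_apply', ih, shift, tail_tail]

theorem isPeriodicPt_shift_iff {q : G.InfPath} {N : ℕ} :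
    Function.IsPeriodicPt shift N q ↔ q.tail N = q := by
  rw [Function.IsPeriodicPt, Function.IsFixedPt, iterate_shift]

theorem tail_sub_eq_self {q : G.InfPath} {n a b : ℕ} (hn : 0 < n) (hq : q.tail n = q)
    (hab : q.tail a = q.tail b) : q.tail (a - b) = q := by
  rcases lt_or_ge a b with hlt | hle
  · rw [Nat.sub_eq_zero_of_le hlt.le, tail_zero]
  have hbn : q.tail (b * n) = q :=
    isPeriodicPt_shift_iff.mp ((isPeriodicPt_shift_iff.mpr hq).const_mul b)
  have hb : b ≤ b * n := Nat.le_mul_of_pos_right b hn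
  calc q.tail (a - b) = (q.tail (b * n)).tail (a - b) := by rw [hbn]
    _ = q.tail (a + (b * n - b)) := by rw [tail_tail]; congr 1; omega
    _ = q := by rw [← tail_tail, hab, tail_tail, Nat.add_sub_cancel' hb, hbn]

def take (q : G.InfPath) (N : ℕ) : G.FinPath where
  src := G.s (q.edges 0)
  edges := List.ofFn fun i : Fin N => q.edges i
  src_eq e he := by
    cases N with
    | zero => simp at he
    | succ n => simp_all [List.ofFn_succ]
  chain := List.isChain_iff_getElem.mpr fun i _ => by simpa using q.chain i

@[simp] theorem take_edges_length (q : G.InfPath) (N : ℕ) : (q.take N).edges.length = N := by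
  simp [take]

@[simp] theorem take_length (q : G.InfPath) (N : ℕ) : (q.take N).length = N :=
  take_edges_length q N

@[simp] theorem take_edges_getElem (q : G.InfPath) (N i : ℕ) (h : i < (q.take N).edges.length) :
    (q.take N).edges[i] = q.edges i := by
  simp [take]

theorem take_rng (q : G.InfPath) (N : ℕ) : (q.take N).rng = G.s (q.edges N) := by
  cases N with
  | zero => rfl
  | succ n =>
    have hne : (q.take (n + 1)).edges ≠ [] := List.ne_nil_of_length_pos (by simp)
    simp only [FinPath.rng, List.getLast?_eq_some_getLast hne, List.getLast_eq_getElem,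
      Option.map_some, Option.getD_some, take_edges_getElem, take_edges_length]
    exact q.chain n

theorem take_add_edges (q : G.InfPath) (M N : ℕ) :
    (q.take (M + N)).edges = (q.take M).edges ++ ((q.tail M).take N).edges := by
  simp [take, List.ofFn_add]

theorem take_mul_edges {q : G.InfPath} {g : ℕ} (hq : q.tail g = q) (t : ℕ) :
    (q.take (g * t)).edges = (List.replicate t (q.take g).edges).flatten := by
  induction t with
  | zero => simp [take]
  | succ t ih => rw [Nat.mul_succ, Nat.add_comm, take_add_edges, hq, ih, List.replicate_succ,
      List.flatten_cons]

def prepend (μ : G.FinPath) (q : G.InfPath) (h : μ.rng = G.s (q.edges 0)) : G.InfPath where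
  edges i := if hi : i < μ.edges.length then μ.edges[i] else q.edges (i - μ.edges.length)
  chain i := by
    rcases lt_trichotomy (i + 1) μ.edges.length with hlt | heq | hgt
    · rw [dif_pos (by omega), dif_pos hlt]
      exact List.isChain_iff_getElem.mp μ.chain i hlt
    · have hne : μ.edges ≠ [] := List.ne_nil_of_length_pos (by omega)
      rw [dif_pos (by omega), dif_neg (by omega), show i + 1 - μ.edges.length = 0 by omega, ← h]
      simp only [FinPath.rng, List.getLast?_eq_some_getLast hne, List.getLast_eq_getElem,
        Option.map_some, Option.getD_some]
      congr 2
      omega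
    · rw [dif_neg (by omega), dif_neg (by omega), show i + 1 - μ.edges.length =
        i - μ.edges.length + 1 by omega]
      exact q.chain _

theorem tail_prepend (μ : G.FinPath) (q : G.InfPath) (h : μ.rng = G.s (q.edges 0)) :
    (prepend μ q h).tail μ.length = q :=
  ext <| funext fun i => by simp [prepend, tail, FinPath.length]

theorem take_prepend_edges (μ : G.FinPath) (q : G.InfPath) (h : μ.rng = G.s (q.edges 0)) :
    ((prepend μ q h).take μ.length).edges = μ.edges :=
  List.ext_getElem (by simp [FinPath.length]) fun i h₁ h₂ => by simp [prepend, h₂]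

def toBPath (q : G.InfPath) : G.BPath :=
  ⟨Sum.inr q, fun _ h => by cases h⟩

theorem toBPath_injective : Function.Injective (toBPath (G := G)) := by
  intro q q' h
  simpa [toBPath] using congrArg Subtype.val h

theorem isInfinite_toBPath (q : G.InfPath) : q.toBPath.IsInfinite := ⟨q, rfl⟩

end InfPath

open InfPath

theorem BPath.IsInfinite.exists_eq_toBPath {x : G.BPath} (h : x.IsInfinite) :
    ∃ q : G.InfPath, x = q.toBPath := by
  obtain ⟨q, hq⟩ := h
  exact ⟨q, Subtype.ext hq⟩

theorem isCat_toBPath_iff {μ : G.FinPath} {p : G.BPath} {q : G.InfPath} :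
    IsCat μ p q.toBPath ↔
      μ.rng = p.src ∧ p = (q.tail μ.length).toBPath ∧ μ.edges = (q.take μ.length).edges := by
  obtain ⟨p | p, hp⟩ := p
  · exact iff_of_false (fun h => h.2) fun h => Sum.inl_ne_inr (congrArg Subtype.val h.2.1)
  refine and_congr_right fun _ => ?_
  show ((∀ (i : ℕ) (h : i < μ.edges.length), q.edges i = μ.edges[i]) ∧
    ∀ i, q.edges (μ.edges.length + i) = p.edges i) ↔ _
  rw [and_comm]
  refine and_congr ⟨fun h => ?_, fun h i => ?_⟩ ⟨fun h => ?_, fun h i hi => ?_⟩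
  · exact Subtype.ext (congrArg Sum.inr (ext (funext fun i => (h i).symm)))
  · obtain rfl : p = q.tail μ.length := Sum.inr.inj (congrArg Subtype.val h)
    rfl
  · exact List.ext_getElem (by simp [FinPath.length]) fun i h₁ _ => by simp [← h i h₁]
  · simp [List.getElem_of_eq h hi]

theorem IsCat.isInfinite_iff {μ : G.FinPath} {p x : G.BPath} (h : IsCat μ p x) :
    x.IsInfinite ↔ p.IsInfinite := by
  obtain ⟨x | x, hx⟩ := x <;> obtain ⟨p | p, hp⟩ := p <;> simp_all [IsCat, BPath.IsInfinite]

theorem isCat_take_tail (q : G.InfPath) (N : ℕ) :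
    IsCat (q.take N) (q.tail N).toBPath q.toBPath :=
  isCat_toBPath_iff.mpr ⟨take_rng q N, by simp, by simp⟩

theorem isCat_prepend (μ : G.FinPath) (q : G.InfPath) (h : μ.rng = G.s (q.edges 0)) :
    IsCat μ q.toBPath (prepend μ q h).toBPath :=
  isCat_toBPath_iff.mpr ⟨h, by rw [tail_prepend], (take_prepend_edges μ q h).symm⟩

theorem exists_isCat {μ : G.FinPath} {p : G.BPath} (hp : p.IsInfinite) (h : μ.rng = p.src) :
    ∃ x, IsCat μ p x := by
  obtain ⟨q, rfl⟩ := hp.exists_eq_toBPath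
  exact ⟨_, isCat_prepend μ q h⟩

theorem InfPath.edges_eq_of_isCat_take {q q' : G.InfPath} {N i : ℕ} {p : G.BPath}
    (h : IsCat (q.take N) p q'.toBPath) (hi : i < N) : q'.edges i = q.edges i := by
  have h := (isCat_toBPath_iff.mp h).2.2
  rw [take_length] at h
  have := List.getElem_of_eq h (by simpa using hi)
  rw [take_edges_getElem, take_edges_getElem] at this
  exact this.symm

theorem InfPath.eventually_not_isCat_take {q q' : G.InfPath} (h : q' ≠ q) :
    ∀ᶠ N in Filter.atTop, ¬ ∃ p, IsCat (q.take N) p q'.toBPath := by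
  obtain ⟨i, hi⟩ : ∃ i, q'.edges i ≠ q.edges i := by
    by_contra! h'
    exact h (ext (funext h'))
  filter_upwards [Filter.eventually_gt_atTop i] with N hN
  rintro ⟨p, hp⟩
  exact hi (edges_eq_of_isCat_take hp hN)

theorem isInfinite_of_isCat_self {c : G.FinPath} {p : G.BPath} (hc : 0 < c.length)
    (h : IsCat c p p) : p.IsInfinite := by
  obtain ⟨p | p, hp⟩ := p
  · have h : p.src = c.src ∧ p.edges = c.edges ++ p.edges := h.2
    have := congrArg List.length h.2
    simp only [List.length_append] at this
    exact absurd hc (by unfold FinPath.length; omega)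
  · exact ⟨p, rfl⟩

theorem tail_length_eq_of_isCat_self {c : G.FinPath} {q : G.InfPath}
    (h : IsCat c q.toBPath q.toBPath) : q.tail c.length = q :=
  (toBPath_injective (isCat_toBPath_iff.mp h).2.1).symm

theorem tailEqLag_toBPath_iff {q q' : G.InfPath} {k : ℤ} :
    TailEqLag q.toBPath q'.toBPath k ↔ ∃ a b : ℕ, q.tail a = q'.tail b ∧ (a : ℤ) - b = k := by
  constructor
  · rintro ⟨μ, ν, p, hμ, hν, rfl⟩
    rw [isCat_toBPath_iff] at hμ hν
    exact ⟨μ.length, ν.length, toBPath_injective (hμ.2.1.symm.trans hν.2.1), rfl⟩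
  · rintro ⟨a, b, h, rfl⟩
    exact ⟨q.take a, q'.take b, (q.tail a).toBPath, isCat_take_tail q a,
      h ▸ isCat_take_tail q' b, by simp⟩

section TailEqLag

variable {x y z : G.BPath} {k l : ℤ}

theorem TailEqLag.isInfinite_iff (h : TailEqLag x y k) : x.IsInfinite ↔ y.IsInfinite := by
  obtain ⟨μ, ν, p, hμ, hν, -⟩ := h
  rw [hμ.isInfinite_iff, hν.isInfinite_iff]

theorem TailEqLag.symm (h : TailEqLag x y k) : TailEqLag y x (-k) := by
  obtain ⟨μ, ν, p, hμ, hν, rfl⟩ := h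
  exact ⟨ν, μ, p, hν, hμ, by ring⟩

theorem TailEqLag.trans (h₁ : TailEqLag x y k) (h₂ : TailEqLag y z l) (hy : y.IsInfinite) :
    TailEqLag x z (k + l) := by
  obtain ⟨q, rfl⟩ := (h₁.isInfinite_iff.mpr hy).exists_eq_toBPath
  obtain ⟨q'', rfl⟩ := (h₂.isInfinite_iff.mp hy).exists_eq_toBPath
  obtain ⟨q', rfl⟩ := hy.exists_eq_toBPath
  obtain ⟨a, b, hab, rfl⟩ := tailEqLag_toBPath_iff.mp h₁
  obtain ⟨c, d, hcd, rfl⟩ := tailEqLag_toBPath_iff.mp h₂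
  refine tailEqLag_toBPath_iff.mpr ⟨a + c, d + b, ?_, by push_cast; ring⟩
  rw [← tail_tail, hab, tail_tail, Nat.add_comm b, ← tail_tail, hcd, tail_tail]

theorem tailEqLag_self (hx : x.IsInfinite) : TailEqLag x x 0 := by
  obtain ⟨q, rfl⟩ := hx.exists_eq_toBPath
  exact tailEqLag_toBPath_iff.mpr ⟨0, 0, rfl, rfl⟩

end TailEqLag

theorem tailEqLag_self_of_dvd {c : G.FinPath} {q : G.InfPath} (hp : IsCat c q.toBPath q.toBPath)
    {d : ℤ} (hd : (c.length : ℤ) ∣ d) : TailEqLag q.toBPath q.toBPath d := by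
  obtain ⟨j, rfl⟩ := hd
  have hper : Function.IsPeriodicPt shift c.length q :=
    isPeriodicPt_shift_iff.mpr (tail_length_eq_of_isCat_self hp)
  refine tailEqLag_toBPath_iff.mpr ⟨c.length * j.toNat, c.length * (-j).toNat, ?_, ?_⟩
  · rw [isPeriodicPt_shift_iff.mp (hper.mul_const _), isPeriodicPt_shift_iff.mp (hper.mul_const _)]
  · push_cast
    rw [← mul_sub, Int.toNat_sub_toNat_neg]

namespace FinPath.IsSimpleClosed

/-- The minimal period of `c^∞` is `|c|`: a shorter one `g` would exhibit `c` as
`(c_1 ⋯ c_g)^(|c| / g)`. -/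
theorem length_dvd {c : G.FinPath} (hc : c.IsSimpleClosed) {q : G.InfPath}
    (hp : IsCat c q.toBPath q.toBPath) {d : ℕ} (hd : q.tail d = q) : c.length ∣ d := by
  obtain ⟨hrng, -, hedges⟩ := isCat_toBPath_iff.mp hp
  have hper : Function.IsPeriodicPt shift c.length q :=
    isPeriodicPt_shift_iff.mpr (tail_length_eq_of_isCat_self hp)
  set g := Function.minimalPeriod shift q
  have hg : 0 < g := hper.minimalPeriod_pos hc.1.1
  have hgq : q.tail g = q := isPeriodicPt_shift_iff.mp (Function.isPeriodicPt_minimalPeriod _ _)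
  obtain ⟨t, ht⟩ := hper.minimalPeriod_dvd
  suffices t = 1 by
    rw [ht, this, mul_one]
    exact (isPeriodicPt_shift_iff.mpr hd).minimalPeriod_dvd
  by_contra ht1
  have ht0 : t ≠ 0 := by
    rintro rfl
    exact hc.1.1.ne' ht
  refine hc.2 ⟨q.take g, t, by omega, ⟨by simpa using hg, ?_⟩, hc.1.2.symm.trans hrng, ?_⟩
  · rw [take_rng]
    exact congrArg (fun q => G.s (q.edges 0)) hgq
  · rw [hedges, ht, take_mul_edges hgq]

theorem length_dvd_of_tailEqLag {c : G.FinPath} (hc : c.IsSimpleClosed) {q : G.InfPath}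
    (hp : IsCat c q.toBPath q.toBPath) {k : ℤ} (h : TailEqLag q.toBPath q.toBPath k) :
    (c.length : ℤ) ∣ k := by
  obtain ⟨a, b, hab, rfl⟩ := tailEqLag_toBPath_iff.mp h
  have htail := tail_length_eq_of_isCat_self hp
  rcases le_total b a with hba | hab'
  · have := Int.natCast_dvd_natCast.mpr (hc.length_dvd hp (tail_sub_eq_self hc.1.1 htail hab))
    rwa [Nat.cast_sub hba] at this
  · have := Int.natCast_dvd_natCast.mpr
      (hc.length_dvd hp (tail_sub_eq_self hc.1.1 htail hab.symm))
    rwa [Nat.cast_sub hab', ← neg_sub, dvd_neg] at this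

end FinPath.IsSimpleClosed

section LeavittPathAlgebra

variable {K : Type} [Field K]

theorem pathElem_vertexPath_mul_pathStarElem_vertexPath (v : G.V) :
    pathElem G K (vertexPath G v) * pathStarElem G K (vertexPath G v) = ofV G K v := by
  simp only [pathElem, pathStarElem, vertexPath, List.reverse_nil, List.map_nil, List.prod_nil,
    mul_one, one_mul, ofV, ← map_mul]
  exact RingQuot.mkAlgHom_rel K (LRel.vv_eq v)

theorem pathElem_singleE_mul_pathStarElem_vertexPath (e : G.E) :
    pathElem G K (singleE G e) * pathStarElem G K (vertexPath G (G.r e)) = ofE G K e := by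
  simp only [pathElem, pathStarElem, singleE, vertexPath, List.reverse_nil, List.map_cons,
    List.map_nil, List.prod_cons, List.prod_nil, mul_one, one_mul, ofV, ofE, ← map_mul]
  rw [map_mul, RingQuot.mkAlgHom_rel K (LRel.e1l e), ← map_mul,
    RingQuot.mkAlgHom_rel K (LRel.e1r e)]

theorem pathElem_vertexPath_mul_pathStarElem_singleE (e : G.E) :
    pathElem G K (vertexPath G (G.r e)) * pathStarElem G K (singleE G e) = ofG G K e := by
  simp only [pathElem, pathStarElem, singleE, vertexPath, List.reverse_cons, List.reverse_nil,
    List.nil_append, List.map_cons, List.map_nil, List.prod_cons, List.prod_nil, mul_one,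
    ofV, ofG, ← map_mul]
  rw [map_mul, RingQuot.mkAlgHom_rel K (LRel.e2r e), ← map_mul,
    RingQuot.mkAlgHom_rel K (LRel.e2l e)]

def monomials (G : DirGraph) (K : Type) [Field K] : Set (LPA G K) :=
  {η | ∃ μ ν : G.FinPath, μ.rng = ν.rng ∧ η = pathElem G K μ * pathStarElem G K ν}

theorem mk_ι_mem_monomials (g : Gen G) :
    RingQuot.mkAlgHom K (LRel G K) (FreeAlgebra.ι K g) ∈ monomials G K := by
  cases g with
  | vtx v => exact ⟨_, _, rfl, (pathElem_vertexPath_mul_pathStarElem_vertexPath v).symm⟩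
  | edg e => exact ⟨singleE G e, vertexPath G (G.r e), rfl,
      (pathElem_singleE_mul_pathStarElem_vertexPath e).symm⟩
  | ghd e => exact ⟨vertexPath G (G.r e), singleE G e, rfl,
      (pathElem_vertexPath_mul_pathStarElem_singleE e).symm⟩

theorem adjoin_monomials : Algebra.adjoin K (monomials G K) = ⊤ := by
  refine top_unique ?_
  calc (⊤ : Subalgebra K (LPA G K))
      = (⊤ : Subalgebra K (FreeAlgebra K (Gen G))).map (RingQuot.mkAlgHom K (LRel G K)) := by
        rw [Algebra.map_top, (AlgHom.range_eq_top _).mpr (RingQuot.mkAlgHom_surjective K _)]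
    _ = Algebra.adjoin K (RingQuot.mkAlgHom K (LRel G K) '' Set.range (FreeAlgebra.ι K)) := by
        rw [← FreeAlgebra.adjoin_range_ι, AlgHom.map_adjoin]
    _ ≤ Algebra.adjoin K (monomials G K) := by
        refine Algebra.adjoin_mono ?_
        rintro _ ⟨_, ⟨g, rfl⟩, rfl⟩
        exact mk_ι_mem_monomials g

theorem commute_of_commute_monomials {M : Type} [AddCommGroup M] [Module K M]
    (ρ : LPA G K →ₐ[K] Module.End K M) {f : Module.End K M}
    (hf : ∀ η ∈ monomials G K, Commute f (ρ η)) (η : LPA G K) : Commute f (ρ η) := by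
  have hle : Algebra.adjoin K (monomials G K) ≤ (Subalgebra.centralizer K {f}).comap ρ :=
    Algebra.adjoin_le fun η hη => (Subalgebra.mem_centralizer_iff K).mpr fun g hg => by
      rw [Set.mem_singleton_iff.mp hg]
      exact (hf η hη).eq
  have hη : η ∈ Algebra.adjoin K (monomials G K) := adjoin_monomials (K := K) ▸ Algebra.mem_top
  exact (Subalgebra.mem_centralizer_iff K).mp (hle hη) f rfl

end LeavittPathAlgebra

section KLModule

variable {K : Type} [Field K] {x x' : G.BPath}
  {ρ : LPA G K →ₐ[K] Module.End K (KLCarrier G K x)}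

theorem Lset.tailEqLag (a : Lset G x) : TailEqLag a.1.1 x a.1.2 := a.2

theorem Lset.isInfinite (hx : x.IsInfinite) (a : Lset G x) : a.1.1.IsInfinite :=
  (Lset.tailEqLag a).isInfinite_iff.mpr hx

theorem KLgr_eq_supported (k : ℤ) :
    KLgr G K x k = Finsupp.supported K K {a : Lset G x | a.1.2 = k} := by
  rw [KLgr, Finsupp.supported_eq_span_single]
  congr 1
  ext m
  constructor <;> rintro ⟨a, ha, rfl⟩ <;> exact ⟨a, ha, rfl⟩

theorem mem_KLgr_iff {k : ℤ} {w : KLCarrier G K x} :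
    w ∈ KLgr G K x k ↔ ∀ a ∈ w.support, a.1.2 = k := by
  rw [KLgr_eq_supported, Finsupp.mem_supported]
  rfl

theorem single_mem_KLgr (a : Lset G x) : Finsupp.single a (1 : K) ∈ KLgr G K x a.1.2 :=
  Submodule.subset_span ⟨a, rfl, rfl⟩

theorem domLCongr_mem_KLgr {σ : Lset G x ≃ Lset G x'} {δ : ℤ}
    (hσ : ∀ a, (σ a).1.2 = a.1.2 + δ) {k : ℤ} {w : KLCarrier G K x} (hw : w ∈ KLgr G K x k) :
    Finsupp.domLCongr (R := K) σ w ∈ KLgr G K x' (k + δ) := by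
  have hle : KLgr G K x k ≤
      (KLgr G K x' (k + δ)).comap (Finsupp.domLCongr (M := K) (R := K) σ).toLinearMap := by
    refine Submodule.span_le.mpr ?_
    rintro _ ⟨a, rfl, rfl⟩
    simp only [SetLike.mem_coe, Submodule.mem_comap, LinearEquiv.coe_coe,
      Finsupp.domLCongr_single]
    exact Submodule.subset_span ⟨σ a, hσ a, rfl⟩
  exact hle hw

theorem KLSpec.apply_proj (hρ : KLSpec G K x ρ) (ν : G.FinPath) (w : KLCarrier G K x) :
    ρ (pathElem G K ν * pathStarElem G K ν) w = w.filter fun a => ∃ p, IsCat ν p a.1.1 := by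
  induction w using Finsupp.induction_linear with
  | zero => rw [map_zero, Finsupp.filter_zero]
  | add v w hv hw => rw [map_add, hv, hw, Finsupp.filter_add]
  | single a c =>
    rw [← Finsupp.smul_single_one, map_smul, Finsupp.filter_smul]
    by_cases h : ∃ p, IsCat ν p a.1.1
    · rw [Finsupp.filter_single_of_pos (fun a : Lset G x => ∃ p, IsCat ν p a.1.1) h]
      obtain ⟨p, hp⟩ := h
      rw [hρ.1 ν ν rfl a a p hp hp (by ring)]
    · rw [hρ.2 ν ν rfl a h,
        Finsupp.filter_single_of_neg (fun a : Lset G x => ∃ p, IsCat ν p a.1.1) h]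

theorem KLSpec.exists_apply_single_eq (hρ : KLSpec G K x ρ) (hx : x.IsInfinite)
    (a b : Lset G x) : ∃ η, ρ η (Finsupp.single a 1) = Finsupp.single b 1 := by
  obtain ⟨μ, ν, p, hμ, hν, hlag⟩ := (Lset.tailEqLag b).trans (Lset.tailEqLag a).symm hx
  exact ⟨_, hρ.1 μ ν (hμ.1.trans hν.1.symm) a b p hν hμ (by omega)⟩

/-- Every monomial acts on `(y, k)` through `y` alone. -/
theorem KLSpec.commute_domLCongr (hρ : KLSpec G K x ρ) (hx : x.IsInfinite)
    {σ : Lset G x ≃ Lset G x} {δ : ℤ} (hσ : ∀ a, (σ a).1 = (a.1.1, a.1.2 + δ)) (η : LPA G K) :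
    Commute (Finsupp.domLCongr σ : KLCarrier G K x ≃ₗ[K] KLCarrier G K x).toLinearMap (ρ η) := by
  refine commute_of_commute_monomials ρ ?_ η
  rintro _ ⟨μ, ν, hμν, rfl⟩
  refine Finsupp.lhom_ext' fun a => LinearMap.ext_ring ?_
  simp only [LinearMap.comp_apply, Module.End.mul_apply, Finsupp.lsingle_apply,
    LinearEquiv.coe_coe, Finsupp.domLCongr_single]
  by_cases h : ∃ p, IsCat ν p a.1.1
  · obtain ⟨p, hp⟩ := h
    obtain ⟨y, hy⟩ := exists_isCat (hp.isInfinite_iff.mp (Lset.isInfinite hx a)) (hμν.trans hp.1)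
    let b : Lset G x := ⟨(y, _), TailEqLag.trans (⟨μ, ν, p, hy, hp, rfl⟩ : TailEqLag y a.1.1 _)
      (Lset.tailEqLag a) (Lset.isInfinite hx a)⟩
    have hσa : IsCat ν p (σ a).1.1 := by rw [hσ]; exact hp
    have hσb : IsCat μ p (σ b).1.1 := by rw [hσ]; exact hy
    rw [hρ.1 μ ν hμν a b p hp hy (by simp only [b]; ring), Finsupp.domLCongr_single,
      hρ.1 μ ν hμν (σ a) (σ b) p hσa hσb (by rw [hσ, hσ]; simp only [b]; ring)]
  · rw [hρ.2 μ ν hμν a h, map_zero, hρ.2 μ ν hμν (σ a) (by rwa [hσ])]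

def lsetShift (hx : x.IsInfinite) {δ : ℤ} (h : TailEqLag x x δ) : Lset G x ≃ Lset G x where
  toFun a := ⟨(a.1.1, a.1.2 + δ), (Lset.tailEqLag a).trans h hx⟩
  invFun a := ⟨(a.1.1, a.1.2 - δ), by
    show TailEqLag a.1.1 x (a.1.2 - δ)
    rw [sub_eq_add_neg]
    exact (Lset.tailEqLag a).trans h.symm hx⟩
  left_inv a := by simp
  right_inv a := by simp

theorem KLSpec.exists_invariant_ne_bot_ne_top (hρ : KLSpec G K x ρ) (hx : x.IsInfinite)
    {δ : ℤ} (hδ : δ ≠ 0) (h : TailEqLag x x δ) :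
    ∃ P : Submodule K (KLCarrier G K x), (∀ η, ∀ w ∈ P, ρ η w ∈ P) ∧ P ≠ ⊥ ∧ P ≠ ⊤ := by
  set f := (Finsupp.domLCongr (M := K) (R := K) (lsetShift hx h)).toLinearMap
  let a₀ : Lset G x := ⟨(x, 0), tailEqLag_self hx⟩
  let φ := Finsupp.linearCombination K fun _ : Lset G x => (1 : K)
  have hφ : φ ∘ₗ (1 - f) = 0 := Finsupp.lhom_ext fun a c => by simp [φ, f]
  refine ⟨LinearMap.range (1 - f), ?_, ?_, ?_⟩
  · rintro η _ ⟨w, rfl⟩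
    have hcomm := (hρ.commute_domLCongr hx (σ := lsetShift hx h) (fun _ => rfl) η).eq
    exact ⟨ρ η w, by simpa [f] using LinearMap.congr_fun hcomm w⟩
  · rw [Ne, LinearMap.range_eq_bot]
    intro h0
    have := LinearMap.congr_fun h0 (Finsupp.single a₀ 1)
    simp only [f, LinearMap.sub_apply, Module.End.one_apply, LinearEquiv.coe_coe,
      Finsupp.domLCongr_single, LinearMap.zero_apply, sub_eq_zero,
      Finsupp.single_left_inj one_ne_zero] at this
    exact hδ (by simpa [a₀, lsetShift] using congrArg (fun a : Lset G x => a.1.2) this.symm)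
  · intro htop
    obtain ⟨w, hw⟩ : Finsupp.single a₀ 1 ∈ LinearMap.range (1 - f) := htop ▸ Submodule.mem_top
    have := LinearMap.congr_fun hφ w
    simp [hw, φ] at this

/-- Project along a long enough prefix of one path in the support of `z`: by homogeneity, the
other paths in the support differ from it. -/
theorem KLSpec.exists_single_mem_of_mem_KLgr (hρ : KLSpec G K x ρ) (hx : x.IsInfinite)
    {P : Submodule K (KLCarrier G K x)} (hP : ∀ η, ∀ w ∈ P, ρ η w ∈ P) {z : KLCarrier G K x}
    {k : ℤ} (hzP : z ∈ P) (hz : z ≠ 0) (hzk : z ∈ KLgr G K x k) :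
    ∃ a, Finsupp.single a 1 ∈ P := by
  obtain ⟨a, ha⟩ := Finsupp.support_nonempty_iff.mpr hz
  obtain ⟨q, hq⟩ := (Lset.isInfinite hx a).exists_eq_toBPath
  have hsep : ∀ b ∈ z.support.erase a,
      ∀ᶠ N in Filter.atTop, ¬ ∃ p, IsCat (q.take N) p b.1.1 := by
    intro b hb
    obtain ⟨hba, hb⟩ := Finset.mem_erase.mp hb
    obtain ⟨q', hq'⟩ := (Lset.isInfinite hx b).exists_eq_toBPath
    rw [hq']
    refine eventually_not_isCat_take fun hqq => hba (Subtype.ext (Prod.ext ?_ ?_))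
    · rw [hq, hq', hqq]
    · rw [mem_KLgr_iff.mp hzk b hb, mem_KLgr_iff.mp hzk a ha]
  obtain ⟨N, hN⟩ := ((Filter.eventually_all_finset _).mpr hsep).exists
  have hproj : ρ (pathElem G K (q.take N) * pathStarElem G K (q.take N)) z =
      Finsupp.single a (z a) := by
    rw [hρ.apply_proj]
    ext b
    rw [Finsupp.filter_apply]
    by_cases hba : b = a
    · subst hba
      rw [if_pos ⟨_, hq ▸ isCat_take_tail q N⟩, Finsupp.single_eq_same]
    · rw [Finsupp.single_eq_of_ne hba, ite_eq_right_iff]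
      intro hb
      by_contra hzb
      exact hN b (Finset.mem_erase.mpr ⟨hba, Finsupp.mem_support_iff.mpr hzb⟩) hb
  refine ⟨a, ?_⟩
  have := P.smul_mem (z a)⁻¹ (hproj ▸ hP _ z hzP)
  rwa [Finsupp.smul_single, smul_eq_mul, inv_mul_cancel₀ (Finsupp.mem_support_iff.mp ha)] at this

theorem KLSpec.eq_bot_or_eq_top (hρ : KLSpec G K x ρ) (hx : x.IsInfinite)
    {P : Submodule K (KLCarrier G K x)} (hP : ∀ η, ∀ w ∈ P, ρ η w ∈ P)
    (hgr : GradedCarrier (fun k => KLgr G K x k) P) : P = ⊥ ∨ P = ⊤ := by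
  refine or_iff_not_imp_left.mpr fun hbot => ?_
  obtain ⟨w, hwP, hw⟩ := Submodule.exists_mem_ne_zero_of_ne_bot hbot
  obtain ⟨l, hl, rfl⟩ := hgr w hwP
  obtain ⟨z, hzl, hz⟩ : ∃ z ∈ l, z ≠ 0 := by
    by_contra! h
    exact hw (List.sum_eq_zero h)
  obtain ⟨hzP, k, hzk⟩ := hl z hzl
  obtain ⟨a, ha⟩ := hρ.exists_single_mem_of_mem_KLgr hx hP hzP hz hzk
  refine top_unique ?_
  rw [← Finsupp.supported_univ, Finsupp.supported_eq_span_single, Submodule.span_le]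
  rintro _ ⟨b, -, rfl⟩
  obtain ⟨η, hη⟩ := hρ.exists_apply_single_eq hx a b
  exact (hη ▸ hP η _ ha : Finsupp.single b 1 ∈ P)

/-- `(y, k)` is fixed by the projections along all prefixes of `y`, hence so is its image. -/
theorem KLSpec.exists_mem_support_fst_eq {ρ' : LPA G K →ₐ[K] Module.End K (KLCarrier G K x')}
    (hρ : KLSpec G K x ρ) (hρ' : KLSpec G K x' ρ') (hx : x.IsInfinite) (hx' : x'.IsInfinite)
    {f : KLCarrier G K x →ₗ[K] KLCarrier G K x'} (hf : Function.Injective f)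
    (hcomm : ∀ η w, f (ρ η w) = ρ' η (f w)) (b : Lset G x) :
    ∃ a ∈ (f (Finsupp.single b 1)).support, a.1.1 = b.1.1 := by
  obtain ⟨q, hq⟩ := (Lset.isInfinite hx b).exists_eq_toBPath
  have hw : f (Finsupp.single b 1) ≠ 0 :=
    (map_ne_zero_iff f hf).mpr (Finsupp.single_ne_zero.mpr one_ne_zero)
  obtain ⟨a, ha⟩ := Finsupp.support_nonempty_iff.mpr hw
  refine ⟨a, ha, ?_⟩
  obtain ⟨q', hq'⟩ := (Lset.isInfinite hx' a).exists_eq_toBPath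
  rw [hq, hq']
  refine congrArg toBPath (ext (funext fun i => ?_))
  have hfix : ρ' (pathElem G K (q.take (i + 1)) * pathStarElem G K (q.take (i + 1)))
      (f (Finsupp.single b 1)) = f (Finsupp.single b 1) := by
    rw [← hcomm, hρ.apply_proj, Finsupp.filter_single_of_pos _ ⟨_, hq ▸ isCat_take_tail q _⟩]
  rw [hρ'.apply_proj, Finsupp.filter_eq_self_iff] at hfix
  obtain ⟨p, hp⟩ := hfix a (Finsupp.mem_support_iff.mp ha)
  rw [hq'] at hp
  exact edges_eq_of_isCat_take hp (Nat.lt_succ_self i)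

theorem KLSpec.tailEqLag_of_linearEquiv (hρ : KLSpec G K x ρ) (hx : x.IsInfinite) {m m' : ℤ}
    (f : KLCarrier G K x ≃ₗ[K] KLCarrier G K x) (hcomm : ∀ η w, f (ρ η w) = ρ η (f w))
    (hf : ∀ k : ℤ, ∀ w ∈ KLgr G K x (k + m), f w ∈ KLgr G K x (k + m')) :
    TailEqLag x x (m' - m) := by
  let a₀ : Lset G x := ⟨(x, 0), tailEqLag_self hx⟩
  obtain ⟨a, ha, ha₁⟩ := hρ.exists_mem_support_fst_eq hρ hx hx f.injective hcomm a₀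
  have ha₂ : a.1.2 = m' - m := by
    rw [← neg_add_eq_sub]
    exact mem_KLgr_iff.mp (hf (-m) _ (by rw [neg_add_cancel]; exact single_mem_KLgr a₀)) a ha
  have := Lset.tailEqLag a
  rwa [ha₁, ha₂] at this

theorem KLSpec.tailEq_of_linearEquiv {ρ' : LPA G K →ₐ[K] Module.End K (KLCarrier G K x')}
    (hρ : KLSpec G K x ρ) (hρ' : KLSpec G K x' ρ') (hx : x.IsInfinite) (hx' : x'.IsInfinite)
    (f : KLCarrier G K x ≃ₗ[K] KLCarrier G K x') (hcomm : ∀ η w, f (ρ η w) = ρ' η (f w)) :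
    TailEq x' x := by
  obtain ⟨a, -, ha⟩ :=
    hρ.exists_mem_support_fst_eq hρ' hx hx' f.injective hcomm ⟨(x, 0), tailEqLag_self hx⟩
  exact ⟨_, ha ▸ (Lset.tailEqLag a).symm⟩

theorem KLSpec.exists_linearEquiv_of_tailEqLag (hρ : KLSpec G K x ρ) (hx : x.IsInfinite)
    {m m' : ℤ} (h : TailEqLag x x (m' - m)) :
    ∃ f : KLCarrier G K x ≃ₗ[K] KLCarrier G K x, (∀ η w, f (ρ η w) = ρ η (f w)) ∧
      (∀ k : ℤ, ∀ w ∈ KLgr G K x (k + m), f w ∈ KLgr G K x (k + m')) ∧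
      (∀ k : ℤ, ∀ w ∈ KLgr G K x (k + m'), f.symm w ∈ KLgr G K x (k + m)) := by
  let σ := lsetShift hx h
  refine ⟨Finsupp.domLCongr σ, fun η w => LinearMap.congr_fun
    (hρ.commute_domLCongr hx (σ := σ) (fun _ => rfl) η).eq w, fun k w hw => ?_, fun k w hw => ?_⟩
  · simpa using domLCongr_mem_KLgr (σ := σ) (fun _ => rfl) hw
  · rw [Finsupp.domLCongr_symm]
    simpa using domLCongr_mem_KLgr (σ := σ.symm) (δ := m - m')
      (fun a => by simp [σ, lsetShift]; ring) hw

end KLModule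

end DirGraph

/-- for a simple closed path `c` of length `n`, the `ℤ`-graded
`L_K(E)`-module `K L_{c^∞}` is graded simple but not simple; `K L_{c^∞}(m)` and
`K L_{c^∞}(m')` are graded isomorphic iff `n ∣ m - m'`; and if `c'` is another simple
closed path with `c'^∞` not tail-equivalent to `c^∞`, then no shift of `K L_{c^∞}` is
graded isomorphic to a shift of `K L_{c'^∞}`. -/
theorem stmt_13 (G : DirGraph) (K : Type) [Field K]
    (c : G.FinPath) (hc : c.IsSimpleClosed)
    (p₀ : G.BPath) (hp : IsCat c p₀ p₀)
    (ρ : LPA G K →ₐ[K] Module.End K (KLCarrier G K p₀)) (hρ : KLSpec G K p₀ ρ) :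
    -- graded simple
    ((∃ w : KLCarrier G K p₀, w ≠ 0) ∧
      ∀ P : Submodule K (KLCarrier G K p₀), (∀ (η : LPA G K), ∀ w ∈ P, ρ η w ∈ P) →
        GradedCarrier (fun k => KLgr G K p₀ k) ↑P → P = ⊥ ∨ P = ⊤) ∧
    -- not simple
    (∃ P : Submodule K (KLCarrier G K p₀),
      (∀ (η : LPA G K), ∀ w ∈ P, ρ η w ∈ P) ∧ P ≠ ⊥ ∧ P ≠ ⊤) ∧
    -- shifts
    (∀ m m' : ℤ,
      (∃ f : KLCarrier G K p₀ ≃ₗ[K] KLCarrier G K p₀,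
        (∀ (η : LPA G K) (w : KLCarrier G K p₀), f (ρ η w) = ρ η (f w)) ∧
        (∀ k : ℤ, ∀ w ∈ KLgr G K p₀ (k + m), f w ∈ KLgr G K p₀ (k + m')) ∧
        (∀ k : ℤ, ∀ w ∈ KLgr G K p₀ (k + m'), f.symm w ∈ KLgr G K p₀ (k + m))) ↔
      (c.length : ℤ) ∣ m - m') ∧
    -- distinct simple closed paths give non-isomorphic graded modules
    (∀ c' : G.FinPath, c'.IsSimpleClosed → ∀ p₀' : G.BPath, IsCat c' p₀' p₀' →
      ¬ TailEq p₀' p₀ →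
      ∀ ρ' : LPA G K →ₐ[K] Module.End K (KLCarrier G K p₀'), KLSpec G K p₀' ρ' →
      ∀ m m' : ℤ,
      ¬ ∃ f : KLCarrier G K p₀ ≃ₗ[K] KLCarrier G K p₀',
        (∀ (η : LPA G K) (w : KLCarrier G K p₀), f (ρ η w) = ρ' η (f w)) ∧
        (∀ k : ℤ, ∀ w ∈ KLgr G K p₀ (k + m), f w ∈ KLgr G K p₀' (k + m')) ∧
        (∀ k : ℤ, ∀ w ∈ KLgr G K p₀' (k + m'), f.symm w ∈ KLgr G K p₀ (k + m))) := by
  obtain ⟨q, rfl⟩ := (isInfinite_of_isCat_self hc.1.1 hp).exists_eq_toBPath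
  have hx := q.isInfinite_toBPath
  have hlag (d : ℤ) : TailEqLag q.toBPath q.toBPath d ↔ (c.length : ℤ) ∣ d :=
    ⟨hc.length_dvd_of_tailEqLag hp, tailEqLag_self_of_dvd hp⟩
  have hdvd (m m' : ℤ) : (c.length : ℤ) ∣ m' - m ↔ (c.length : ℤ) ∣ m - m' := by
    rw [← neg_sub, dvd_neg]
  refine ⟨⟨⟨Finsupp.single ⟨(q.toBPath, 0), tailEqLag_self hx⟩ 1,
      Finsupp.single_ne_zero.mpr one_ne_zero⟩, fun P hP hgr => hρ.eq_bot_or_eq_top hx hP hgr⟩,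
    hρ.exists_invariant_ne_bot_ne_top hx (by exact_mod_cast hc.1.1.ne') ((hlag _).mpr dvd_rfl),
    fun m m' => ⟨?_, fun hd => ?_⟩, ?_⟩
  · rintro ⟨f, hcomm, hf, -⟩
    exact (hdvd m m').mp ((hlag _).mp (hρ.tailEqLag_of_linearEquiv hx f hcomm hf))
  · exact hρ.exists_linearEquiv_of_tailEqLag hx ((hlag _).mpr ((hdvd m m').mpr hd))
  · rintro c' hc' p' hp' hne ρ' hρ' m m' ⟨f, hcomm, -, -⟩
    obtain ⟨q', rfl⟩ := (isInfinite_of_isCat_self hc'.1.1 hp').exists_eq_toBPath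
    exact hne (hρ.tailEq_of_linearEquiv hρ' hx q'.isInfinite_toBPath f hcomm)
end

section
/- Let E be a directed graph and K a field. Up to graded isomorphism, the finite-dimensional graded simple modules over the ℤ-graded algebra L_K(E) are exactly the shifted Chen modules V_{[x]}(n), where n ∈ ℤ and x is a singular vertex of E such that the set {μ ∈ F(E) : r(μ) = x} of finite paths ending at x is finite. -/
open scoped Classical

open DirGraph


/-!
Both directions rest on one computation with families `B μ` indexed by the paths `μ` ending at
a vertex `v` on which the generators act as on the basis of the Chen module `V_{[v]}`: for `ν`
of maximal length in the support of a combination `∑ c_μ B μ`, the operator `ν^*` sends it to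
`c_ν B v`, and `μ • B v = B μ`. So such a family is linearly independent as soon as `B v ≠ 0`,
and a module with such a basis is simple.

Conversely, in a finite-dimensional graded simple module take a nonzero homogeneous vector of
lowest degree `d`; some vertex `v` does not kill it (the common kernel of the vertices is a graded
submodule, and it is not everything because the module is unital), so we may assume `v m = m`,
and `e^* m = 0` for all edges since degree `d - 1` is zero. Then (CK2) forces `v` to be singular,
the vectors `μ m` form such a family, so there are finitely many `μ`, and the linear map
`V_{[v]} → M` sending `μ ↦ μ m` is an `L_K(E)`-homomorphism of degree `d`, injective by
simplicity of `V_{[v]}` and onto since its image is graded.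
-/

theorem Module.Basis.map_smul_of_forall_map_smul {R ι A Y Y' : Type*} [Semiring R]
    [AddCommMonoid Y] [Module R Y] [AddCommMonoid Y'] [Module R Y'] [Monoid A]
    [DistribMulAction A Y] [DistribMulAction A Y'] [SMulCommClass A R Y] [SMulCommClass A R Y']
    (b : Module.Basis ι R Y) (f : Y →ₗ[R] Y') (a : A) (h : ∀ i, f (a • b i) = a • f (b i))
    (y : Y) : f (a • y) = a • f y :=
  LinearMap.congr_fun (b.ext (f₁ := f ∘ₗ DistribSMul.toLinearMap R Y a)
    (f₂ := DistribSMul.toLinearMap R Y' a ∘ₗ f) h) y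

namespace DirGraph

variable {G : DirGraph}

theorem FinPath.ext {μ ν : G.FinPath} (h₁ : μ.src = ν.src) (h₂ : μ.edges = ν.edges) : μ = ν := by
  cases μ; cases ν; simp_all

theorem FinPath.src_eq_s_of_edges_eq_cons {μ : G.FinPath} {e : G.E} {t : List G.E}
    (h : μ.edges = e :: t) : μ.src = G.s e :=
  (μ.src_eq e (by rw [h]; rfl)).symm

theorem FinPath.rng_eq_src_of_edges_eq_nil {μ : G.FinPath} (h : μ.edges = []) : μ.rng = μ.src := by
  simp [FinPath.rng, h]

theorem vertexPath_rng (v : G.V) : (vertexPath G v).rng = v := by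
  simp [FinPath.rng, vertexPath]

theorem singleE_rng (e : G.E) : (singleE G e).rng = G.r e := by
  simp [FinPath.rng, singleE]

def consPath (e : G.E) (μ : G.FinPath) (h : G.r e = μ.src) : G.FinPath where
  src := G.s e
  edges := e :: μ.edges
  src_eq := by intro f hf; simp at hf; subst hf; rfl
  chain := by
    refine List.isChain_cons.2 ⟨?_, μ.chain⟩
    intro f hf; rw [h]; exact (μ.src_eq f hf).symm

theorem consPath_rng (e : G.E) (μ : G.FinPath) (h : G.r e = μ.src) :
    (consPath e μ h).rng = μ.rng := by
  rcases hl : μ.edges with _ | ⟨f, t⟩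
  · simp [FinPath.rng, consPath, hl, h]
  · obtain ⟨y, hy⟩ := Option.isSome_iff_exists.1 (List.getLast?_isSome.2 (List.cons_ne_nil f t))
    simp [FinPath.rng, consPath, hl, hy]

def tailPath (μ : G.FinPath) (e : G.E) (t : List G.E) (h : μ.edges = e :: t) : G.FinPath where
  src := G.r e
  edges := t
  src_eq := by
    intro f hf
    have := μ.chain
    rw [h] at this
    exact ((List.isChain_cons.1 this).1 f hf).symm
  chain := by
    have := μ.chain; rw [h] at this; exact (List.isChain_cons.1 this).2

theorem tailPath_rng (μ : G.FinPath) (e : G.E) (t : List G.E) (h : μ.edges = e :: t) :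
    (tailPath μ e t h).rng = μ.rng := by
  revert h
  rcases t with _ | ⟨f, t'⟩ <;> intro h
  · simp [FinPath.rng, tailPath, h]
  · obtain ⟨y, hy⟩ := Option.isSome_iff_exists.1 (List.getLast?_isSome.2 (List.cons_ne_nil f t'))
    simp [FinPath.rng, tailPath, h, hy]

theorem consPath_tailPath (μ : G.FinPath) (e : G.E) (t : List G.E) (h : μ.edges = e :: t) :
    consPath e (tailPath μ e t h) rfl = μ :=
  FinPath.ext (FinPath.src_eq_s_of_edges_eq_cons h).symm h.symm

variable (G) in
/-- For singular `v`, these index the basis of the Chen module `V_{[v]}`. -/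
abbrev PathsTo (v : G.V) : Type := {μ : G.FinPath // μ.rng = v}

namespace PathsTo

variable {v : G.V}

def vertex (v : G.V) : G.PathsTo v := ⟨vertexPath G v, vertexPath_rng v⟩

def cons (e : G.E) (μ : G.PathsTo v) (h : G.r e = μ.1.src) : G.PathsTo v :=
  ⟨consPath e μ.1 h, (consPath_rng e μ.1 h).trans μ.2⟩

def tail (μ : G.PathsTo v) {e : G.E} {t : List G.E} (h : μ.1.edges = e :: t) : G.PathsTo v :=
  ⟨tailPath μ.1 e t h, (tailPath_rng μ.1 e t h).trans μ.2⟩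

theorem tail_val (μ : G.PathsTo v) {e : G.E} {t : List G.E} (h : μ.1.edges = e :: t) :
    (μ.tail h).1 = tailPath μ.1 e t h := rfl

theorem cons_tail (μ : G.PathsTo v) {e : G.E} {t : List G.E} (h : μ.1.edges = e :: t) :
    (μ.tail h).cons e rfl = μ :=
  Subtype.ext (consPath_tailPath μ.1 e t h)

theorem ext_edges {μ ν : G.PathsTo v} (h : μ.1.edges = ν.1.edges) : μ = ν := by
  refine Subtype.ext (FinPath.ext ?_ h)
  rcases hμ : μ.1.edges with _ | ⟨e, t⟩
  · rw [← FinPath.rng_eq_src_of_edges_eq_nil hμ, ← FinPath.rng_eq_src_of_edges_eq_nil (h ▸ hμ),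
      μ.2, ν.2]
  · rw [FinPath.src_eq_s_of_edges_eq_cons hμ, FinPath.src_eq_s_of_edges_eq_cons (h ▸ hμ)]

theorem eq_iff_edges_eq {μ ν : G.PathsTo v} : μ = ν ↔ μ.1.edges = ν.1.edges :=
  ⟨fun h => h ▸ rfl, ext_edges⟩

theorem eq_vertex_of_edges_eq_nil {μ : G.PathsTo v} (h : μ.1.edges = []) : μ = vertex v :=
  ext_edges h

end PathsTo

section Relations

variable {K : Type} [Field K]

private theorem mkAlgHom_eq_of_rel {x y : FreeAlgebra K (Gen G)} (h : LRel G K x y) :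
    RingQuot.mkAlgHom K (LRel G K) x = RingQuot.mkAlgHom K (LRel G K) y :=
  RingQuot.mkAlgHom_rel K h

theorem ofV_mul_ofV_self (v : G.V) : ofV G K v * ofV G K v = ofV G K v := by
  unfold ofV; rw [← map_mul]; exact mkAlgHom_eq_of_rel (LRel.vv_eq v)

theorem ofV_mul_ofV_of_ne {v w : G.V} (h : v ≠ w) : ofV G K v * ofV G K w = 0 := by
  unfold ofV; rw [← map_mul, mkAlgHom_eq_of_rel (LRel.vv_ne h), map_zero]

theorem ofV_mul_ofE (e : G.E) : ofV G K (G.s e) * ofE G K e = ofE G K e := by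
  unfold ofV ofE; rw [← map_mul]; exact mkAlgHom_eq_of_rel (LRel.e1l e)

theorem ofE_mul_ofV (e : G.E) : ofE G K e * ofV G K (G.r e) = ofE G K e := by
  unfold ofV ofE; rw [← map_mul]; exact mkAlgHom_eq_of_rel (LRel.e1r e)

theorem ofV_mul_ofG (e : G.E) : ofV G K (G.r e) * ofG G K e = ofG G K e := by
  unfold ofV ofG; rw [← map_mul]; exact mkAlgHom_eq_of_rel (LRel.e2l e)

theorem ofG_mul_ofV (e : G.E) : ofG G K e * ofV G K (G.s e) = ofG G K e := by
  unfold ofV ofG; rw [← map_mul]; exact mkAlgHom_eq_of_rel (LRel.e2r e)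

theorem ofG_mul_ofE_self (e : G.E) : ofG G K e * ofE G K e = ofV G K (G.r e) := by
  unfold ofV ofE ofG; rw [← map_mul]; exact mkAlgHom_eq_of_rel (LRel.ck1_eq e)

theorem ofG_mul_ofE_of_ne {e f : G.E} (h : e ≠ f) : ofG G K e * ofE G K f = 0 := by
  unfold ofE ofG; rw [← map_mul, mkAlgHom_eq_of_rel (LRel.ck1_ne h), map_zero]

theorem ofV_eq_sum_ofE_mul_ofG (v : G.V) (hfin : {e | G.s e = v}.Finite) (hne : ∃ e, G.s e = v) :
    ofV G K v = ∑ e ∈ hfin.toFinset, ofE G K e * ofG G K e := by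
  unfold ofV ofE ofG
  simp only [mkAlgHom_eq_of_rel (LRel.ck2 v hfin hne), map_sum, map_mul]

theorem lpa_induction {C : LPA G K → Prop}
    (algebraMap : ∀ c : K, C (algebraMap K (LPA G K) c))
    (ofV : ∀ w : G.V, C (ofV G K w)) (ofE : ∀ e : G.E, C (ofE G K e))
    (ofG : ∀ e : G.E, C (ofG G K e))
    (mul : ∀ a b, C a → C b → C (a * b))
    (add : ∀ a b, C a → C b → C (a + b)) (a : LPA G K) : C a := by
  obtain ⟨b, rfl⟩ := RingQuot.mkAlgHom_surjective K (LRel G K) a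
  induction b using FreeAlgebra.induction with
  | grade0 c => rw [AlgHom.commutes]; exact algebraMap c
  | grade1 x =>
    cases x with
    | vtx w => exact ofV w
    | edg e => exact ofE e
    | ghd e => exact ofG e
  | mul a b ha hb => rw [map_mul]; exact mul _ _ ha hb
  | add a b ha hb => rw [map_add]; exact add _ _ ha hb

end Relations

section PathElements

variable {K : Type} [Field K]

theorem pathElem_vertexPath (v : G.V) : pathElem G K (vertexPath G v) = ofV G K v := by
  simp [pathElem, vertexPath]

theorem pathStarElem_vertexPath (v : G.V) : pathStarElem G K (vertexPath G v) = ofV G K v := by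
  simp [pathStarElem, vertexPath]

theorem pathElem_consPath (e : G.E) (μ : G.FinPath) (h : G.r e = μ.src) :
    pathElem G K (consPath e μ h) = ofE G K e * pathElem G K μ := by
  simp only [pathElem, consPath, List.map_cons, List.prod_cons]
  rw [← mul_assoc, ← mul_assoc, ofV_mul_ofE, ← h, ofE_mul_ofV]

theorem pathStarElem_consPath (e : G.E) (μ : G.FinPath) (h : G.r e = μ.src) :
    pathStarElem G K (consPath e μ h) = pathStarElem G K μ * ofG G K e := by
  simp only [pathStarElem, consPath, List.reverse_cons, List.map_append, List.prod_append,
    List.map_cons, List.map_nil, List.prod_cons, List.prod_nil, mul_one]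
  rw [mul_assoc, ofG_mul_ofV, mul_assoc, ← h, ofV_mul_ofG]

theorem pathElem_eq_ofE_mul {μ : G.FinPath} {e : G.E} {t : List G.E} (h : μ.edges = e :: t) :
    pathElem G K μ = ofE G K e * pathElem G K (tailPath μ e t h) := by
  conv_lhs => rw [← consPath_tailPath μ e t h]
  exact pathElem_consPath _ _ _

theorem pathStarElem_eq_mul_ofG {μ : G.FinPath} {e : G.E} {t : List G.E} (h : μ.edges = e :: t) :
    pathStarElem G K μ = pathStarElem G K (tailPath μ e t h) * ofG G K e := by
  conv_lhs => rw [← consPath_tailPath μ e t h]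
  exact pathStarElem_consPath _ _ _

theorem pathElem_mul_ofV_rng (μ : G.FinPath) :
    pathElem G K μ * ofV G K μ.rng = pathElem G K μ := by
  rcases List.eq_nil_or_concat μ.edges with h | ⟨l, e, h⟩
  · rw [FinPath.rng_eq_src_of_edges_eq_nil h]
    simp [pathElem, h, ofV_mul_ofV_self]
  · rw [List.concat_eq_append] at h
    have hr : μ.rng = G.r e := by simp [FinPath.rng, h]
    simp only [hr, pathElem, h, List.map_append, List.map_cons, List.map_nil, List.prod_append,
      List.prod_cons, List.prod_nil, mul_one]
    rw [mul_assoc, mul_assoc, ofE_mul_ofV]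

theorem ofV_mul_pathElem (w : G.V) (μ : G.FinPath) :
    ofV G K w * pathElem G K μ = if w = μ.src then pathElem G K μ else 0 := by
  rw [pathElem, ← mul_assoc]
  split_ifs with h
  · rw [h, ofV_mul_ofV_self]
  · rw [ofV_mul_ofV_of_ne h, zero_mul]

theorem ofE_mul_pathElem_of_ne {e : G.E} {μ : G.FinPath} (h : G.r e ≠ μ.src) :
    ofE G K e * pathElem G K μ = 0 := by
  rw [pathElem, ← mul_assoc, ← ofE_mul_ofV e, mul_assoc (ofE G K e), ofV_mul_ofV_of_ne h, mul_zero,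
    zero_mul]

theorem ofG_mul_pathElem {e : G.E} {μ : G.FinPath} {t : List G.E} (h : μ.edges = e :: t) :
    ofG G K e * pathElem G K μ = pathElem G K (tailPath μ e t h) := by
  rw [pathElem_eq_ofE_mul h, ← mul_assoc, ofG_mul_ofE_self, ofV_mul_pathElem]
  exact if_pos rfl

theorem ofG_mul_pathElem_of_ne {e f : G.E} {μ : G.FinPath} {t : List G.E}
    (h : μ.edges = f :: t) (hef : e ≠ f) : ofG G K e * pathElem G K μ = 0 := by
  rw [pathElem_eq_ofE_mul h, ← mul_assoc, ofG_mul_ofE_of_ne hef, zero_mul]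

theorem ofV_mem_LPAdeg_zero (w : G.V) : ofV G K w ∈ LPAdeg G K 0 := by
  refine Submodule.subset_span ⟨vertexPath G w, vertexPath G w, rfl, by simp, ?_⟩
  rw [pathElem_vertexPath, pathStarElem_vertexPath, ofV_mul_ofV_self]

theorem ofG_mem_LPAdeg_neg_one (e : G.E) : ofG G K e ∈ LPAdeg G K (-1) := by
  refine Submodule.subset_span ⟨vertexPath G (G.r e), singleE G e,
    by rw [singleE_rng, vertexPath_rng], by simp [FinPath.length, singleE, vertexPath], ?_⟩
  simp [pathElem_vertexPath, pathStarElem, singleE, ofG_mul_ofV, ofV_mul_ofG]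

theorem pathElem_mem_LPAdeg (μ : G.FinPath) : pathElem G K μ ∈ LPAdeg G K μ.length := by
  refine Submodule.subset_span ⟨μ, vertexPath G μ.rng, (vertexPath_rng μ.rng).symm,
    by simp [FinPath.length, vertexPath], ?_⟩
  rw [pathStarElem_vertexPath, pathElem_mul_ofV_rng]

end PathElements

/-- `B` transforms under the generators of `L_K(E)` like the standard basis of the Chen module
`V_{[v]}`. -/
structure IsChenFamily (K : Type) [Field K] {v : G.V} {Y : Type} [AddCommGroup Y]
    [Module (LPA G K) Y] (B : G.PathsTo v → Y) : Prop where
  ofV_smul (w : G.V) (μ : G.PathsTo v) : ofV G K w • B μ = if w = μ.1.src then B μ else 0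
  ofE_smul (e : G.E) (μ : G.PathsTo v) (h : G.r e = μ.1.src) : ofE G K e • B μ = B (μ.cons e h)
  ofE_smul_of_ne (e : G.E) (μ : G.PathsTo v) (h : G.r e ≠ μ.1.src) : ofE G K e • B μ = 0
  ofG_smul (e : G.E) (μ : G.PathsTo v) {t : List G.E} (h : μ.1.edges = e :: t) :
    ofG G K e • B μ = B (μ.tail h)
  ofG_smul_of_ne (e : G.E) (μ : G.PathsTo v) (h : ∀ t, μ.1.edges ≠ e :: t) : ofG G K e • B μ = 0

namespace IsChenFamily

variable {K : Type} [Field K] {v : G.V} {Y : Type} [AddCommGroup Y] [Module (LPA G K) Y]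
  {B : G.PathsTo v → Y}

theorem pathElem_smul_vertex (hB : IsChenFamily K B) (μ : G.PathsTo v) :
    pathElem G K μ.1 • B (.vertex v) = B μ := by
  obtain ⟨l, hl⟩ : ∃ l, μ.1.edges = l := ⟨_, rfl⟩
  induction l generalizing μ with
  | nil =>
    obtain rfl := PathsTo.eq_vertex_of_edges_eq_nil hl
    rw [PathsTo.vertex, pathElem_vertexPath, hB.ofV_smul]
    exact if_pos rfl
  | cons e t ih =>
    rw [pathElem_eq_ofE_mul hl, mul_smul, ← PathsTo.tail_val, ih (μ.tail hl) rfl,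
      hB.ofE_smul e _ rfl, μ.cons_tail]

theorem pathStarElem_smul_of_length_le (hB : IsChenFamily K B) {μ ν : G.PathsTo v}
    (h : μ.1.length ≤ ν.1.length) :
    pathStarElem G K ν.1 • B μ = if μ = ν then B (.vertex v) else 0 := by
  obtain ⟨l, hl⟩ : ∃ l, ν.1.edges = l := ⟨_, rfl⟩
  induction l generalizing μ ν with
  | nil =>
    have hμ : μ.1.edges = [] := List.eq_nil_of_length_eq_zero
      (Nat.le_zero.1 (hl ▸ h : μ.1.edges.length ≤ ([] : List G.E).length))
    obtain rfl := PathsTo.eq_vertex_of_edges_eq_nil hl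
    obtain rfl := PathsTo.eq_vertex_of_edges_eq_nil hμ
    rw [PathsTo.vertex, pathStarElem_vertexPath, hB.ofV_smul]
    exact (if_pos rfl).trans (if_pos rfl).symm
  | cons e t ih =>
    rw [pathStarElem_eq_mul_ofG hl, ← PathsTo.tail_val, mul_smul]
    by_cases hμ : ∃ t', μ.1.edges = e :: t'
    · obtain ⟨t', hμ⟩ := hμ
      have hlen : (μ.tail hμ).1.length ≤ (ν.tail hl).1.length := by
        simp only [FinPath.length, hμ, hl, List.length_cons] at h
        exact Nat.le_of_succ_le_succ h
      have htail : μ.tail hμ = ν.tail hl ↔ μ = ν := by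
        simp only [PathsTo.eq_iff_edges_eq, hμ, hl, List.cons.injEq, true_and]
        rfl
      rw [hB.ofG_smul e μ hμ, ih hlen rfl]
      exact if_congr htail rfl rfl
    · push Not at hμ
      rw [hB.ofG_smul_of_ne e μ hμ, smul_zero, if_neg]
      rintro rfl
      exact hμ t hl

variable [Module K Y] [IsScalarTower K (LPA G K) Y]

theorem exists_pathStarElem_smul_sum (hB : IsChenFamily K B) (s : Finset (G.PathsTo v))
    (c : G.PathsTo v → K) (hc : ∃ μ ∈ s, c μ ≠ 0) :
    ∃ ν, c ν ≠ 0 ∧ pathStarElem G K ν.1 • ∑ μ ∈ s, c μ • B μ = c ν • B (.vertex v) := by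
  classical
  obtain ⟨μ, hμ, hcμ⟩ := hc
  obtain ⟨ν, hν, hmax⟩ :=
    (s.filter (c · ≠ 0)).exists_max_image (·.1.length) ⟨μ, Finset.mem_filter.2 ⟨hμ, hcμ⟩⟩
  obtain ⟨hνs, hcν⟩ := Finset.mem_filter.1 hν
  refine ⟨ν, hcν, ?_⟩
  rw [Finset.smul_sum, Finset.sum_eq_single ν]
  · rw [smul_comm, hB.pathStarElem_smul_of_length_le le_rfl, if_pos rfl]
  · intro μ hμ hμν
    by_cases hcμ : c μ = 0
    · rw [hcμ, zero_smul, smul_zero]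
    · rw [smul_comm, hB.pathStarElem_smul_of_length_le (hmax μ (Finset.mem_filter.2 ⟨hμ, hcμ⟩)),
        if_neg hμν, smul_zero]
  · exact fun h => absurd hνs h

theorem linearIndependent (hB : IsChenFamily K B) (h0 : B (.vertex v) ≠ 0) :
    LinearIndependent K B := by
  rw [linearIndependent_iff']
  intro s c hsum μ hμ
  by_contra hcμ
  obtain ⟨ν, hcν, hν⟩ := hB.exists_pathStarElem_smul_sum s c ⟨μ, hμ, hcμ⟩
  rw [hsum, smul_zero, eq_comm, smul_eq_zero] at hν
  exact hν.elim hcν h0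

theorem eq_bot_or_eq_top {b : Module.Basis (G.PathsTo v) K Y} (hb : IsChenFamily K ⇑b)
    (P : Submodule (LPA G K) Y) : P = ⊥ ∨ P = ⊤ := by
  refine or_iff_not_imp_left.2 fun hP => ?_
  obtain ⟨z, hzP, hz⟩ := (Submodule.ne_bot_iff P).1 hP
  have hzsum : ∑ μ ∈ (b.repr z).support, b.repr z μ • b μ = z := by
    simpa [Finsupp.linearCombination_apply, Finsupp.sum] using b.linearCombination_repr z
  obtain ⟨μ, hμ⟩ := Finsupp.support_nonempty_iff.2 (b.repr.map_ne_zero_iff.2 hz)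
  obtain ⟨ν, hcν, hν⟩ := hb.exists_pathStarElem_smul_sum (b.repr z).support (b.repr z)
    ⟨μ, hμ, Finsupp.mem_support_iff.1 hμ⟩
  rw [hzsum] at hν
  have hvertex : b (.vertex v) ∈ P := by
    have := P.smul_of_tower_mem (b.repr z ν)⁻¹ (hν ▸ P.smul_mem (pathStarElem G K ν.1) hzP)
    rwa [smul_smul, inv_mul_cancel₀ hcν, one_smul] at this
  have hall : Set.range b ⊆ P.restrictScalars K := by
    rintro _ ⟨μ, rfl⟩
    rw [← hb.pathElem_smul_vertex μ]
    exact P.smul_mem _ hvertex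
  rw [← Submodule.restrictScalars_eq_top_iff K, eq_top_iff, ← b.span_eq]
  exact Submodule.span_le.2 hall

variable {Y' : Type} [AddCommGroup Y'] [Module K Y'] [Module (LPA G K) Y']
  [IsScalarTower K (LPA G K) Y'] {B' : G.PathsTo v → Y'}

theorem constr_smul {b : Module.Basis (G.PathsTo v) K Y} (hb : IsChenFamily K ⇑b)
    (hB' : IsChenFamily K B') (a : LPA G K) (y : Y) :
    b.constr K B' (a • y) = a • b.constr K B' y := by
  induction a using lpa_induction generalizing y with
  | algebraMap c => rw [algebraMap_smul, map_smul, algebraMap_smul]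
  | mul a a' ha ha' => rw [mul_smul, ha, ha', mul_smul]
  | add a a' ha ha' => rw [add_smul, map_add, ha, ha', add_smul]
  | ofV w =>
    refine b.map_smul_of_forall_map_smul _ _ (fun μ => ?_) y
    rw [b.constr_basis, hb.ofV_smul, hB'.ofV_smul, apply_ite (b.constr K B'), map_zero,
      b.constr_basis]
  | ofE e =>
    refine b.map_smul_of_forall_map_smul _ _ (fun μ => ?_) y
    by_cases h : G.r e = μ.1.src
    · rw [b.constr_basis, hb.ofE_smul e μ h, hB'.ofE_smul e μ h, b.constr_basis]
    · rw [b.constr_basis, hb.ofE_smul_of_ne e μ h, hB'.ofE_smul_of_ne e μ h, map_zero]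
  | ofG e =>
    refine b.map_smul_of_forall_map_smul _ _ (fun μ => ?_) y
    by_cases h : ∃ t, μ.1.edges = e :: t
    · obtain ⟨t, h⟩ := h
      rw [b.constr_basis, hb.ofG_smul e μ h, hB'.ofG_smul e μ h, b.constr_basis]
    · push Not at h
      rw [b.constr_basis, hb.ofG_smul_of_ne e μ h, hB'.ofG_smul_of_ne e μ h, map_zero]

noncomputable def hom {b : Module.Basis (G.PathsTo v) K Y} (hb : IsChenFamily K ⇑b)
    (hB' : IsChenFamily K B') : Y →ₗ[LPA G K] Y' where
  toFun := b.constr K B'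
  map_add' := map_add _
  map_smul' := hb.constr_smul hB'

theorem hom_apply {b : Module.Basis (G.PathsTo v) K Y} (hb : IsChenFamily K ⇑b)
    (hB' : IsChenFamily K B') (y : Y) : hb.hom hB' y = b.constr K B' y := rfl

end IsChenFamily

section ChenModule

variable {v : G.V} (hv : IsSingular G v)

def PathsTo.toBPath (μ : G.PathsTo v) : G.BPath :=
  ⟨Sum.inl μ.1, fun _ h => by obtain rfl := Sum.inl_injective h; rw [μ.2]; exact hv⟩

theorem PathsTo.toBPath_injective : Function.Injective (PathsTo.toBPath hv) := fun _ _ h =>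
  Subtype.ext (Sum.inl_injective (congrArg Subtype.val h))

theorem isCat_vertexBPath (μ : G.PathsTo v) :
    IsCat μ.1 (vertexBPath G v hv) (μ.toBPath hv) :=
  ⟨μ.2, rfl, (List.append_nil _).symm⟩

theorem eq_vertexBPath_of_isCat {ν : G.FinPath} {p : G.BPath}
    (h : IsCat ν p (vertexBPath G v hv)) : ν.edges = [] ∧ p = vertexBPath G v hv := by
  obtain ⟨hrng, hcat⟩ := h
  obtain ⟨p | p, hp⟩ := p
  · obtain ⟨hsrc, hedges⟩ := hcat
    obtain ⟨hν, hq⟩ := List.append_eq_nil_iff.1 hedges.symm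
    have hνv : ν.rng = v := by rw [FinPath.rng_eq_src_of_edges_eq_nil hν]; exact hsrc.symm
    refine ⟨hν, Subtype.ext (congrArg Sum.inl (FinPath.ext ?_ hq))⟩
    exact hrng.symm.trans hνv
  · exact hcat.elim

theorem exists_eq_toBPath_of_isCat {μ : G.FinPath} {y : G.BPath}
    (h : IsCat μ (vertexBPath G v hv) y) : ∃ hμ : μ.rng = v, y = PathsTo.toBPath hv ⟨μ, hμ⟩ := by
  obtain ⟨hrng, hcat⟩ := h
  obtain ⟨y | y, hy⟩ := y
  · obtain ⟨hsrc, hedges⟩ := hcat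
    have hμ : y = μ := FinPath.ext hsrc (by simpa [vertexPath] using hedges)
    exact ⟨hrng, Subtype.ext (congrArg Sum.inl hμ)⟩
  · exact hcat.elim

theorem tailEqLag_vertexBPath_iff (y : G.BPath) (k : ℤ) :
    TailEqLag y (vertexBPath G v hv) k ↔
      ∃ μ : G.PathsTo v, y = μ.toBPath hv ∧ (μ.1.length : ℤ) = k := by
  constructor
  · rintro ⟨μ, ν, p, hμ, hν, rfl⟩
    obtain ⟨hνe, rfl⟩ := eq_vertexBPath_of_isCat hv hν
    obtain ⟨hμv, rfl⟩ := exists_eq_toBPath_of_isCat hv hμ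
    exact ⟨⟨μ, hμv⟩, rfl, by simp [FinPath.length, hνe]⟩
  · rintro ⟨μ, rfl, rfl⟩
    exact ⟨μ.1, vertexPath G v, vertexBPath G v hv, isCat_vertexBPath hv μ,
      isCat_vertexBPath hv (.vertex v), by simp [FinPath.length, vertexPath]⟩

noncomputable def orbitEquiv : G.PathsTo v ≃ orbit (vertexBPath G v hv) :=
  Equiv.ofBijective
    (fun μ => ⟨μ.toBPath hv, μ.1.length, (tailEqLag_vertexBPath_iff hv _ _).2 ⟨μ, rfl, rfl⟩⟩)
    ⟨fun _ _ h => PathsTo.toBPath_injective hv (congrArg Subtype.val h), fun ⟨y, k, hy⟩ => by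
      obtain ⟨μ, rfl, -⟩ := (tailEqLag_vertexBPath_iff hv y k).1 hy
      exact ⟨μ, rfl⟩⟩

theorem isCat_singleE_cons (e : G.E) (μ : G.PathsTo v) (h : G.r e = μ.1.src) :
    IsCat (singleE G e) (μ.toBPath hv) ((μ.cons e h).toBPath hv) :=
  ⟨(singleE_rng e).trans h, rfl, rfl⟩

theorem isCat_singleE_tail (μ : G.PathsTo v) {e : G.E} {t : List G.E} (h : μ.1.edges = e :: t) :
    IsCat (singleE G e) ((μ.tail h).toBPath hv) (μ.toBPath hv) := by
  conv => arg 3; rw [← μ.cons_tail h]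
  exact isCat_singleE_cons hv e (μ.tail h) rfl

theorem not_isCat_singleE_of_ne (e : G.E) (μ : G.PathsTo v) (h : G.r e ≠ μ.1.src) :
    ¬∃ q, IsCat (singleE G e) (μ.toBPath hv) q := by
  rintro ⟨q, hq, -⟩
  exact h ((singleE_rng e).symm.trans hq)

theorem not_isCat_singleE_toBPath (e : G.E) (μ : G.PathsTo v) (h : ∀ t, μ.1.edges ≠ e :: t) :
    ¬∃ p, IsCat (singleE G e) p (μ.toBPath hv) := by
  rintro ⟨⟨p | p, hp⟩, -, hcat⟩
  · exact h p.edges hcat.2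
  · exact hcat

variable {K : Type} [Field K] {M : Type} [AddCommGroup M] [Module K M] [Module (LPA G K) M]

noncomputable def chenBasis (sp : ChenSpec G K (fun _ => 1) (vertexBPath G v hv) M) :
    Module.Basis (G.PathsTo v) K M :=
  sp.basis.reindex (orbitEquiv hv).symm

variable (sp : ChenSpec G K (fun _ => 1) (vertexBPath G v hv) M)

theorem chenBasis_apply (μ : G.PathsTo v) : chenBasis hv sp μ = sp.basis (orbitEquiv hv μ) := by
  simp [chenBasis]

theorem isChenFamily_chenBasis : IsChenFamily K (chenBasis hv sp) where
  ofV_smul w μ := by rw [chenBasis_apply]; exact sp.act_v w _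
  ofE_smul e μ h := by
    rw [chenBasis_apply, chenBasis_apply,
      sp.act_e e _ (orbitEquiv hv _) (isCat_singleE_cons hv e μ h), one_smul]
  ofE_smul_of_ne e μ h := by
    rw [chenBasis_apply]; exact sp.act_e_zero e _ (not_isCat_singleE_of_ne hv e μ h)
  ofG_smul e μ t h := by
    rw [chenBasis_apply, chenBasis_apply, sp.act_g e (orbitEquiv hv (μ.tail h)) (orbitEquiv hv μ)
      (isCat_singleE_tail hv μ h), inv_one,
      one_smul]
  ofG_smul_of_ne e μ h := by
    rw [chenBasis_apply]; exact sp.act_g_zero e _ (not_isCat_singleE_toBPath hv e μ h)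

theorem chenW_le {k : ℤ} {P : Submodule K M}
    (h : ∀ μ : G.PathsTo v, (μ.1.length : ℤ) = k → chenBasis hv sp μ ∈ P) :
    chenW sp.basis k ≤ P := by
  refine Submodule.span_le.2 ?_
  rintro _ ⟨p, hp, rfl⟩
  obtain ⟨μ, hμ, hk⟩ := (tailEqLag_vertexBPath_iff hv p k).1 hp
  obtain rfl : p = orbitEquiv hv μ := Subtype.ext hμ
  rw [← chenBasis_apply]
  exact h μ hk

end ChenModule

theorem iSup_chenW_add_eq_top {K' : Type} [Field K'] {x : G.BPath} {M : Type} [AddCommGroup M]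
    [Module K' M] (b : Module.Basis (orbit x) K' M) (n : ℤ) : ⨆ k, chenW b (k + n) = ⊤ := by
  rw [eq_top_iff, ← b.span_eq, Submodule.span_le]
  rintro _ ⟨p, rfl⟩
  obtain ⟨k, hk⟩ := p.2
  refine Submodule.mem_iSup_of_mem (k - n) (Submodule.subset_span ⟨p, ?_, rfl⟩)
  rwa [sub_add_cancel]

section Grading

variable {K M : Type} [Field K] [AddCommGroup M] [Module K M]

theorem _root_.iSupIndep.eq_of_le_of_iSup_eq_top {ι : Type*} {U W : ι → Submodule K M}
    (hW : iSupIndep W) (hUW : ∀ i, U i ≤ W i) (hU : ⨆ i, U i = ⊤) (i : ι) : U i = W i := by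
  classical
  refine le_antisymm (hUW i) fun m hm => ?_
  obtain ⟨z, hzU, hzm⟩ := (Submodule.mem_iSup_iff_exists_finsupp U m).1 (hU ▸ Submodule.mem_top)
  have hsingle : ∀ j, (Pi.single i m : ι → M) j ∈ W j := fun j => by
    rcases eq_or_ne j i with rfl | hj
    · simpa using hm
    · simp [Pi.single_eq_of_ne hj]
  have hsum :
      ∑ j ∈ insert i z.support, z j = ∑ j ∈ insert i z.support, (Pi.single i m : ι → M) j := by
    rw [Finset.sum_pi_single', if_pos (Finset.mem_insert_self _ _), ← hzm, Finsupp.sum]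
    exact (Finset.sum_subset (Finset.subset_insert _ _)
      fun j _ hj => Finsupp.notMem_support_iff.1 hj).symm
  have hzi := (iSupIndep_iff_finsetSum_eq_imp_eq W).1 hW _ z (Pi.single i m)
    (fun j _ => ⟨hUW j (hzU j), hsingle j⟩) hsum i (Finset.mem_insert_self _ _)
  rw [Pi.single_eq_same] at hzi
  exact hzi ▸ hzU i

theorem gradedCarrier_span_range {ι : Type*} {W : ℤ → Submodule K M} (φ : ι → M) (deg : ι → ℤ)
    (hφ : ∀ i, φ i ∈ W (deg i)) : GradedCarrier W (Submodule.span K (Set.range φ)) := by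
  intro m hm
  obtain ⟨c, rfl⟩ := Finsupp.mem_span_range_iff_exists_finsupp.1 hm
  refine ⟨c.support.toList.map fun i => c i • φ i, ?_, Finset.sum_map_toList _ _⟩
  simp only [List.mem_map, Finset.mem_toList]
  rintro _ ⟨i, -, rfl⟩
  exact ⟨Submodule.smul_mem _ _ (Submodule.subset_span ⟨i, rfl⟩), deg i, (W _).smul_mem _ (hφ i)⟩

/-- Operators of degree zero commute with the homogeneous projections. -/
theorem gradedCarrier_setOf_forall_smul_eq_zero {ι A : Type*} [Monoid A] [DistribMulAction A M]
    {W : ℤ → Submodule K M} (hW : DirectSum.IsInternal W) (a : ι → A)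
    (ha : ∀ i k, ∀ y ∈ W k, a i • y ∈ W k) : GradedCarrier W {m | ∀ i, a i • m = 0} := by
  intro m hm
  obtain ⟨z, hzW, rfl⟩ :=
    (Submodule.mem_iSup_iff_exists_finsupp W m).1 (hW.submodule_iSup_eq_top ▸ Submodule.mem_top)
  have hz : ∀ k ∈ z.support, ∀ i, a i • z k = 0 := fun k hk i =>
    (iSupIndep_iff_finsetSum_eq_zero_imp_eq_zero W).1 hW.submodule_iSupIndep z.support
      (fun k => a i • z k) (fun k _ => ha i k _ (hzW k))
      (by rw [← Finset.smul_sum]; exact hm i) k hk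
  refine ⟨z.support.toList.map z, ?_, Finset.sum_map_toList _ _⟩
  simp only [List.mem_map, Finset.mem_toList]
  rintro _ ⟨k, hk, rfl⟩
  exact ⟨hz k hk, k, hzW k⟩

theorem exists_lowest_degree [FiniteDimensional K M] [Nontrivial M] {W : ℤ → Submodule K M}
    (hW : DirectSum.IsInternal W) : ∃ d, W d ≠ ⊥ ∧ ∀ k < d, W k = ⊥ := by
  have hfin : {k | W k ≠ ⊥}.Finite := by
    have := hW.submodule_iSupIndep.fintypeNeBotOfFiniteDimensional
    exact Set.finite_coe_iff.1 (@Finite.of_fintype _ this)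
  have hne : {k | W k ≠ ⊥}.Nonempty := by
    by_contra h
    have hbot : ∀ k, W k = ⊥ := fun k => by_contra fun hk => h ⟨k, hk⟩
    exact bot_ne_top ((iSup_eq_bot.2 hbot).symm.trans hW.submodule_iSup_eq_top)
  obtain ⟨d, hd, hmin⟩ := Set.exists_min_image _ id hfin hne
  exact ⟨d, hd, fun k hk => by_contra fun h => (hmin k h).not_gt hk⟩

end Grading

section Modules

variable {K : Type} [Field K] {M : Type} [AddCommGroup M] [Module K M] [Module (LPA G K) M]
  [IsScalarTower K (LPA G K) M]

variable (G K M) in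
/-- By (E1) and (E2), the vectors killed by all vertices are killed by all of `L_K(E)` except
the scalars. -/
def vertexKer : Submodule (LPA G K) M where
  carrier := {m | ∀ w, ofV G K w • m = 0}
  add_mem' hx hy w := by rw [smul_add, hx w, hy w, add_zero]
  zero_mem' _ := smul_zero _
  smul_mem' a := by
    induction a using lpa_induction with
    | algebraMap c => intro x hx w; rw [algebraMap_smul, smul_comm, hx w, smul_zero]
    | ofV u => intro x hx w; rw [hx u, smul_zero]
    | ofE e => intro x hx w; rw [← ofE_mul_ofV, mul_smul, hx, smul_zero, smul_zero]
    | ofG e => intro x hx w; rw [← ofG_mul_ofV, mul_smul, hx, smul_zero, smul_zero]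
    | mul a b ha hb => intro x hx; rw [mul_smul]; exact ha (hb hx)
    | add a b ha hb => intro x hx w; rw [add_smul, smul_add, ha hx w, hb hx w, add_zero]

theorem exists_ofV_smul_ne_zero (hu : IsUnitalModule G K M) {W : ℤ → Submodule K M}
    (hW : IsModuleGrading G K M W)
    (hsimp : ∀ P : Submodule (LPA G K) M, GradedCarrier W ↑P → P = ⊥ ∨ P = ⊤)
    {m : M} (hm : m ≠ 0) : ∃ w, ofV G K w • m ≠ 0 := by
  by_contra! hker
  have hgr : GradedCarrier W ↑(vertexKer G K M) :=
    gradedCarrier_setOf_forall_smul_eq_zero hW.1 (ofV G K) fun w k y hy => by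
      simpa using hW.2 0 k _ y (ofV_mem_LPAdeg_zero w) hy
  rcases hsimp _ hgr with h | h
  · have : m ∈ vertexKer G K M := hker
    rw [h, Submodule.mem_bot] at this
    exact hm this
  · have hspan : Submodule.span (LPA G K) {y : M | ∃ w m', y = ofV G K w • m'} = ⊥ := by
      rw [Submodule.span_eq_bot]
      rintro _ ⟨w, m', rfl⟩
      exact (h ▸ Submodule.mem_top : m' ∈ vertexKer G K M) w
    exact hm (by simpa [hspan] using hu m)

omit [Module K M] [IsScalarTower K (LPA G K) M] in
theorem isSingular_of_forall_ofG_smul_eq_zero {v : G.V} {m : M} (hm : m ≠ 0)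
    (hv : ofV G K v • m = m) (hg : ∀ e, ofG G K e • m = 0) : IsSingular G v := by
  by_contra hns
  simp only [IsSingular, IsSink, IsInfEmitter, not_or, not_forall, not_not,
    Set.not_infinite] at hns
  obtain ⟨⟨e, he⟩, hfin⟩ := hns
  apply hm
  rw [← hv, ofV_eq_sum_ofE_mul_ofG v hfin ⟨e, he⟩, Finset.sum_smul]
  exact Finset.sum_eq_zero fun e _ => by rw [mul_smul, hg, smul_zero]

omit [Module K M] [IsScalarTower K (LPA G K) M] in
theorem isChenFamily_pathElem_smul {v : G.V} {m : M} (hv : ofV G K v • m = m)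
    (hg : ∀ e, ofG G K e • m = 0) : IsChenFamily K fun μ : G.PathsTo v => pathElem G K μ.1 • m where
  ofV_smul w μ := by rw [← mul_smul, ofV_mul_pathElem, ite_smul, zero_smul]
  ofE_smul e μ h := by rw [← mul_smul, ← pathElem_consPath e μ.1 h]; rfl
  ofE_smul_of_ne e μ h := by rw [← mul_smul, ofE_mul_pathElem_of_ne h, zero_smul]
  ofG_smul e μ t h := by rw [← mul_smul, ofG_mul_pathElem h]; rfl
  ofG_smul_of_ne e μ h := by
    rcases hμ : μ.1.edges with _ | ⟨f, t⟩
    · obtain rfl := PathsTo.eq_vertex_of_edges_eq_nil hμ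
      rw [PathsTo.vertex, pathElem_vertexPath, hv, hg]
    · rw [← mul_smul, ofG_mul_pathElem_of_ne hμ fun hef => h t (by rw [hμ, hef]), zero_smul]

theorem exists_vertex_vector_killed_by_ofG [FiniteDimensional K M] (hu : IsUnitalModule G K M)
    {W : ℤ → Submodule K M} (hW : IsModuleGrading G K M W)
    (hsimp : ∀ P : Submodule (LPA G K) M, GradedCarrier W ↑P → P = ⊥ ∨ P = ⊤)
    (hM : ∃ m : M, m ≠ 0) :
    ∃ (d : ℤ) (v : G.V) (m : M),
      m ∈ W d ∧ m ≠ 0 ∧ ofV G K v • m = m ∧ ∀ e, ofG G K e • m = 0 := by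
  obtain ⟨m, hm⟩ := hM
  have : Nontrivial M := ⟨⟨m, 0, hm⟩⟩
  obtain ⟨d, hd, hlow⟩ := exists_lowest_degree hW.1
  obtain ⟨m₁, hm₁W, hm₁⟩ := Submodule.exists_mem_ne_zero_of_ne_bot hd
  obtain ⟨v, hv⟩ := exists_ofV_smul_ne_zero hu hW hsimp hm₁
  have hdeg : ofV G K v • m₁ ∈ W d := by
    simpa using hW.2 0 d _ _ (ofV_mem_LPAdeg_zero v) hm₁W
  refine ⟨d, v, _, hdeg, hv, by rw [← mul_smul, ofV_mul_ofV_self], fun e => ?_⟩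
  have := hW.2 (-1) d _ _ (ofG_mem_LPAdeg_neg_one e) hdeg
  rwa [hlow (-1 + d) (by omega), Submodule.mem_bot] at this

end Modules

section Classification

variable {K : Type} [Field K] {M : Type} [AddCommGroup M] [Module K M] [Module (LPA G K) M]
  [IsScalarTower K (LPA G K) M] {W : ℤ → Submodule K M}
  {N : Type} [AddCommGroup N] [Module K N] [Module (LPA G K) N] [IsScalarTower K (LPA G K) N]
  {v : G.V} (hv : IsSingular G v) (sp : ChenSpec G K (fun _ => 1) (vertexBPath G v hv) N)
  {B : G.PathsTo v → M}

/-- Injective because `V_{[v]}` is simple, surjective because the image is a nonzero graded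
submodule. -/
theorem bijective_hom_chenBasis
    (hsimp : ∀ P : Submodule (LPA G K) M, GradedCarrier W ↑P → P = ⊥ ∨ P = ⊤)
    (hB : IsChenFamily K B) (hB0 : B (.vertex v) ≠ 0) {d : ℤ}
    (hBW : ∀ μ, B μ ∈ W (μ.1.length + d)) :
    Function.Bijective ((isChenFamily_chenBasis hv sp).hom hB) := by
  have hb := isChenFamily_chenBasis hv sp
  have hf : hb.hom hB (chenBasis hv sp (.vertex v)) = B (.vertex v) :=
    (chenBasis hv sp).constr_basis K B _
  refine ⟨LinearMap.ker_eq_bot.1 ((hb.eq_bot_or_eq_top _).resolve_right fun h => hB0 ?_),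
    LinearMap.range_eq_top.1 ((hsimp _ ?_).resolve_left fun h => hB0 ?_)⟩
  · rw [← hf]; exact LinearMap.mem_ker.1 (h ▸ Submodule.mem_top)
  · have : (LinearMap.range (hb.hom hB) : Set M) = Submodule.span K (Set.range B) := by
      rw [← (chenBasis hv sp).constr_range K]; rfl
    rw [this]
    exact gradedCarrier_span_range B _ hBW
  · rw [← hf, ← Submodule.mem_bot (LPA G K), ← h]
    exact LinearMap.mem_range_self _ _

theorem gradedIsoLPA_of_isChenFamily (hW : IsModuleGrading G K M W)
    (hsimp : ∀ P : Submodule (LPA G K) M, GradedCarrier W ↑P → P = ⊥ ∨ P = ⊤)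
    (hB : IsChenFamily K B) (hB0 : B (.vertex v) ≠ 0) {d : ℤ}
    (hBW : ∀ μ, B μ ∈ W (μ.1.length + d)) :
    GradedIsoLPA G K M N W (fun k => chenW sp.basis (k + -d)) := by
  have hb := isChenFamily_chenBasis hv sp
  have hbij := bijective_hom_chenBasis hv sp hsimp hB hB0 hBW
  set f := (hb.hom hB).restrictScalars K
  have hdeg : ∀ k, (chenW sp.basis (k + -d)).map f ≤ W k := fun k =>
    Submodule.map_le_iff_le_comap.2 <| chenW_le hv sp fun μ hμ => by
      rw [Submodule.mem_comap, LinearMap.restrictScalars_apply, IsChenFamily.hom_apply,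
        Module.Basis.constr_basis]
      convert hBW μ using 2
      omega
  have hmap := hW.1.submodule_iSupIndep.eq_of_le_of_iSup_eq_top hdeg (by
    rw [← Submodule.map_iSup, iSup_chenW_add_eq_top, Submodule.map_top, LinearMap.range_eq_top]
    exact hbij.2)
  let e := LinearEquiv.ofBijective _ hbij
  refine ⟨e.symm, fun k m hm => ?_, fun k y hy => hdeg k ⟨y, hy, rfl⟩⟩
  obtain ⟨y, hy, rfl⟩ := (hmap k).symm ▸ hm
  rw [show e.symm (f y) = y from e.symm_apply_apply y]
  exact hy

end Classification

end DirGraph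

/-- finite-dimensional graded simple `L_K(E)`-modules: up to graded
isomorphism they are exactly the shifted Chen modules `V_{[x]}(n)`, where `n ∈ ℤ` and `x`
is a singular vertex such that the set of finite paths ending at `x` is finite. -/
theorem stmt_15 (G : DirGraph) (K : Type) [Field K] :
    -- each such `V_{[x]}(n)` is a finite-dimensional graded simple module
    (∀ (v : G.V) (hv : IsSingular G v), {μ : G.FinPath | μ.rng = v}.Finite →
      ∀ n : ℤ,
      ∀ (M : Type) [AddCommGroup M] [Module K M] [Module (LPA G K) M]
        [IsScalarTower K (LPA G K) M],
      ∀ sp : ChenSpec G K (fun _ => 1) (vertexBPath G v hv) M,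
      FiniteDimensional K M ∧ (∃ m : M, m ≠ 0) ∧
        ∀ P : Submodule (LPA G K) M,
          GradedCarrier (fun k => chenW sp.basis (k + n)) ↑P → P = ⊥ ∨ P = ⊤) ∧
    -- conversely, every finite-dimensional graded simple module is of this form
    (∀ (M : Type) [AddCommGroup M] [Module K M] [Module (LPA G K) M]
      [IsScalarTower K (LPA G K) M],
      IsUnitalModule G K M → FiniteDimensional K M →
      ∀ W : ℤ → Submodule K M, IsModuleGrading G K M W →
      ((∃ m : M, m ≠ 0) ∧
        ∀ P : Submodule (LPA G K) M, GradedCarrier W ↑P → P = ⊥ ∨ P = ⊤) →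
      ∃ (v : G.V) (hv : IsSingular G v), {μ : G.FinPath | μ.rng = v}.Finite ∧
        ∃ n : ℤ,
        ∀ (N : Type) [AddCommGroup N] [Module K N] [Module (LPA G K) N]
          [IsScalarTower K (LPA G K) N],
        ∀ sp : ChenSpec G K (fun _ => 1) (vertexBPath G v hv) N,
        GradedIsoLPA G K M N W (fun k => chenW sp.basis (k + n))) := by
  refine ⟨fun v hv hfin n M _ _ _ _ sp => ?_, fun M _ _ _ _ hu _ W hW ⟨hM, hsimp⟩ => ?_⟩
  · have : Finite (G.PathsTo v) := hfin
    exact ⟨Module.Finite.of_basis (chenBasis hv sp), ⟨_, (chenBasis hv sp).ne_zero (.vertex v)⟩,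
      fun P _ => (isChenFamily_chenBasis hv sp).eq_bot_or_eq_top P⟩
  · obtain ⟨d, v, m, hmW, hm, hvm, hgm⟩ := exists_vertex_vector_killed_by_ofG hu hW hsimp hM
    have hv := isSingular_of_forall_ofG_smul_eq_zero hm hvm hgm
    have hB := isChenFamily_pathElem_smul (K := K) (v := v) hvm hgm
    have hB0 : pathElem G K (PathsTo.vertex v).1 • m ≠ 0 := by
      rwa [PathsTo.vertex, pathElem_vertexPath, hvm]
    refine ⟨v, hv, Set.finite_coe_iff.1 (hB.linearIndependent hB0).finite, -d,
      fun N _ _ _ _ sp => gradedIsoLPA_of_isChenFamily hv sp hW hsimp hB hB0 fun μ => ?_⟩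
    simpa using hW.2 _ _ _ _ (pathElem_mem_LPAdeg μ.1) hmW
end
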